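/- arXiv:2309.07785 — 7 statements merged into one kernel-verified Lean document; each statement's English description precedes it below -/
import Mathlib

section
/- For any integer partition π, the BG-rank of π, defined as (number of odd-indexed odd parts) minus (number of even-indexed odd parts), equals r₀ − r₁, where r₀ (resp. r₁) is the number of cells (i,j) in the Young diagram of π with i+j even (resp. i+j odd) (using 0-indexed rows and columns, i.e., the 2-residue Ferrers diagram filling with 0 in position (i,j) when i+j is even). -/
open Finset PowerSeries

/-- A partition represented as a non-increasing list of positive integers. -/
def IsPartitionList (L : List ℕ) : Prop :=
  L.Pairwise (· ≥ ·) ∧ ∀ x ∈ L, 0 < x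

/-- A partition into distinct parts (strict partition). -/
def IsStrictPartitionList (L : List ℕ) : Prop :=
  L.Pairwise (· > ·) ∧ ∀ x ∈ L, 0 < x

/-- BG-rank: (# odd parts in odd (1-based) positions) − (# odd parts in even positions). -/
def bgRank (L : List ℕ) : ℤ :=
  (((L.zipIdx.map Prod.swap).filter (fun p => p.2 % 2 == 1 && p.1 % 2 == 0)).length : ℤ) -
  (((L.zipIdx.map Prod.swap).filter (fun p => p.2 % 2 == 1 && p.1 % 2 == 1)).length : ℤ)

/-- Length of the `j`-th (1-based) column of the shifted Young diagram of `L`: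
row `i` (1-based) occupies columns `i, …, i + λ_i - 1`. -/
def shiftedCol (L : List ℕ) (j : ℕ) : ℕ :=
  ((Finset.range L.length).filter (fun i => i + 1 ≤ j ∧ j ≤ i + L.getD i 0)).card

/-- Alternating sum `∑_{i=1}^{m} (-1)^i c_i` of shifted column lengths. -/
def altColSum (L : List ℕ) (m : ℕ) : ℤ :=
  ∑ i ∈ Finset.range m, (-1 : ℤ) ^ (i + 1) * (shiftedCol L (i + 1) : ℤ)

/-- An (a,b)-sequence: `d_i = a + i` for `1 ≤ i ≤ b`, non-increasing from index `b`,
positive entries, and alternating sum zero. (0-based indexing via `getD`.) -/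
def IsABSeq (a b : ℕ) (d : List ℕ) : Prop :=
  1 ≤ b ∧ b ≤ d.length ∧ (∀ x ∈ d, 0 < x) ∧
  (∀ i < b, d.getD i 0 = a + i + 1) ∧
  (∀ i j, b - 1 ≤ i → i ≤ j → j < d.length → d.getD j 0 ≤ d.getD i 0) ∧
  (∑ i ∈ Finset.range d.length, (-1 : ℤ) ^ (i + 1) * (d.getD i 0 : ℤ)) = 0

/-- The quantities `b_i`: `b_1 = d_1`, `b_i = d_i - b_{i-1}` (0-based: `bAux d (i-1) = b_i`). -/
def bAux (d : List ℕ) : ℕ → ℤ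
  | 0 => (d.getD 0 0 : ℤ)
  | n + 1 => (d.getD (n + 1) 0 : ℤ) - bAux d n

/-- The q-Pochhammer symbol `(q²; q²)_n` as a power series in `q`. -/
noncomputable def qq2Poch (n : ℕ) : PowerSeries ℚ :=
  ∏ i ∈ Finset.range n, (1 - (PowerSeries.X : PowerSeries ℚ) ^ (2 * (i + 1)))

/-- The Gaussian binomial coefficient `[m choose n]_{q²}` as a power series in `q`,
zero unless `0 ≤ n ≤ m`. -/
noncomputable def gaussBinom2 (m : ℕ) (n : ℤ) : PowerSeries ℚ :=
  if 0 ≤ n ∧ n ≤ (m : ℤ) then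
    qq2Poch m * (qq2Poch n.toNat * qq2Poch (m - n.toNat))⁻¹
  else 0

/-! In the 2-residue diagram the cells of row `i` alternate in residue, so row `i` of length `n`
contributes `∑_{j<n} (-1)^(i+j) = (-1)^i (n mod 2)` to `r₀ - r₁`: only the parity of each part
survives, with sign `+` in odd (1-based) positions and `-` in even ones, which is the BG-rank. -/

theorem card_filter_even_sub_card_filter_odd (s : Finset ℕ) (f : ℕ → ℕ) :
    (#(s.filter fun j => f j % 2 = 0) : ℤ) - #(s.filter fun j => f j % 2 = 1) =
      ∑ j ∈ s, (-1 : ℤ) ^ f j := by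
  rw [card_filter, card_filter]
  push_cast
  rw [← sum_sub_distrib]
  refine sum_congr rfl fun j _ => ?_
  rcases Nat.mod_two_eq_zero_or_one (f j) with h | h <;> simp [h, neg_one_pow_eq_pow_mod_two]

theorem sum_neg_one_pow_add_range (i n : ℕ) :
    ∑ j ∈ range n, (-1 : ℤ) ^ (i + j) = (-1) ^ i * (n % 2 : ℕ) := by
  simp_rw [pow_add, ← mul_sum, neg_one_geom_sum]
  rcases Nat.even_or_odd n with h | h
  · simp [h, Nat.even_iff.mp h]
  · simp [Nat.not_even_iff_odd.mpr h, Nat.odd_iff.mp h]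

theorem ite_sub_ite_mod_two (k a : ℕ) :
    ((if (a % 2 == 1 && k % 2 == 0) = true then 1 else 0 : ℤ) -
      (if (a % 2 == 1 && k % 2 == 1) = true then 1 else 0 : ℤ)) = (-1) ^ k * (a % 2 : ℕ) := by
  rcases Nat.mod_two_eq_zero_or_one a with ha | ha <;>
  rcases Nat.mod_two_eq_zero_or_one k with hk | hk <;>
  simp [ha, hk, neg_one_pow_eq_pow_mod_two]

theorem length_filter_zipIdx_sub (L : List ℕ) (k : ℕ) :
    ((((L.zipIdx k).map Prod.swap).filter fun p => p.2 % 2 == 1 && p.1 % 2 == 0).length : ℤ) -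
      (((L.zipIdx k).map Prod.swap).filter fun p => p.2 % 2 == 1 && p.1 % 2 == 1).length =
      ∑ i ∈ range L.length, (-1 : ℤ) ^ (k + i) * (L.getD i 0 % 2 : ℕ) := by
  induction L generalizing k with
  | nil => simp
  | cons a L ih =>
    rw [List.length_cons, sum_range_succ', List.zipIdx_cons, List.map_cons]
    simp only [List.getD_cons_succ, List.getD_cons_zero, ← add_assoc, Nat.add_right_comm k _ 1,
      ← ih, add_zero]
    have hhead := ite_sub_ite_mod_two k a
    simp only [List.filter_cons, Prod.swap_prod_mk]
    split_ifs at hhead ⊢ <;> push_cast [List.length_cons] at hhead ⊢ <;> linarith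

theorem bgRank_eq_residue_difference_general (L : List ℕ) :
    bgRank L =
      ((∑ i ∈ Finset.range L.length,
          ((Finset.range (L.getD i 0)).filter (fun j => (i + j) % 2 = 0)).card : ℕ) : ℤ) -
      ((∑ i ∈ Finset.range L.length,
          ((Finset.range (L.getD i 0)).filter (fun j => (i + j) % 2 = 1)).card : ℕ) : ℤ) := by
  rw [bgRank, length_filter_zipIdx_sub, Nat.cast_sum, Nat.cast_sum, ← sum_sub_distrib]
  refine sum_congr rfl fun i _ => ?_
  rw [card_filter_even_sub_card_filter_odd, sum_neg_one_pow_add_range, zero_add]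

/-- BG-rank equals r₀ − r₁, the difference of counts of cells (i,j)
(0-indexed) of the Young diagram with i+j even resp. odd. -/
theorem bgRank_eq_residue_difference (L : List ℕ) (hL : IsPartitionList L) :
    bgRank L =
      ((∑ i ∈ Finset.range L.length,
          ((Finset.range (L.getD i 0)).filter (fun j => (i + j) % 2 = 0)).card : ℕ) : ℤ) -
      ((∑ i ∈ Finset.range L.length,
          ((Finset.range (L.getD i 0)).filter (fun j => (i + j) % 2 = 1)).card : ℕ) : ℤ) :=
  bgRank_eq_residue_difference_general L
end

section
/- For any nonnegative integer N, integer k, and ν ∈ {0,1}, the generating function B_{2N+ν}(k,q) for partitions into distinct parts, each part at most 2N+ν, with BG-rank equal to k, satisfies B_{2N+ν}(k,q) = q^{2k²−k} · [2N+ν choose N+k]_{q²}, where [m choose n]_q denotes the Gaussian binomial coefficient. -/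
open Finset PowerSeries

/-- Generating function for partitions into distinct parts, each at most `M`,
with BG-rank equal to `k`. -/
noncomputable def strictBGgf (M : ℕ) (k : ℤ) : PowerSeries ℚ :=
  PowerSeries.mk fun n =>
    (Set.ncard {L : List ℕ | IsStrictPartitionList L ∧ (∀ x ∈ L, x ≤ M) ∧
        L.sum = n ∧ bgRank L = k} : ℚ)

/-!
Deleting the largest possible part `M + 1` from a strict partition with parts at most `M + 1`
gives the recursion `B_{M+1}(k) = B_M(k) + q^{M+1} B_M(ε - k)`, where `ε` is the parity of `M + 1`:
prepending a part shifts every other part to a position of the opposite parity, which negates the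
BG-rank and adds `ε`. The right-hand sides `q^{2k²-k} [2N+ν choose N+k]_{q²}` satisfy the same
recursion by the two `q`-Pascal rules (after the symmetry `[m choose n] = [m choose m-n]`),
and both sides agree for `M = 0`.
-/

theorem bgRank_cons (a : ℕ) (T : List ℕ) :
    bgRank (a :: T) = ((a % 2 : ℕ) : ℤ) - bgRank T := by
  have hshift : ∀ r s : ℕ, r + s = 1 →
      (T.zipIdx.filter fun p => p.1 % 2 == 1 && (p.2 + 1) % 2 == r).length
      = (T.zipIdx.filter fun p => p.1 % 2 == 1 && p.2 % 2 == s).length := by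
    intro r s hrs
    congr 1
    refine List.filter_congr fun p _ => ?_
    congr 1
    simp only [beq_eq_beq]
    omega
  simp only [bgRank, List.zipIdx_cons', List.map_cons, List.map_map, List.filter_cons,
    List.filter_map, Function.comp_def, Prod.map_fst, Prod.map_snd, id_eq,
    Prod.fst_swap, Prod.snd_swap]
  rcases Nat.mod_two_eq_zero_or_one a with h | h <;>
    simp [h, hshift 0 1 rfl, hshift 1 0 rfl, sub_sub_eq_add_sub, add_comm]

theorem isStrictPartitionList_cons {a : ℕ} {T : List ℕ} :
    IsStrictPartitionList (a :: T) ↔ (∀ x ∈ T, x < a) ∧ 0 < a ∧ IsStrictPartitionList T := by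
  simp only [IsStrictPartitionList, List.pairwise_cons, List.mem_cons, forall_eq_or_imp, gt_iff_lt]
  tauto

def strictBGSet (M : ℕ) (k : ℤ) (n : ℕ) : Set (List ℕ) :=
  {L | IsStrictPartitionList L ∧ (∀ x ∈ L, x ≤ M) ∧ L.sum = n ∧ bgRank L = k}

theorem coeff_strictBGgf (M : ℕ) (k : ℤ) (n : ℕ) :
    coeff n (strictBGgf M k) = (strictBGSet M k n).ncard := by
  rw [strictBGgf, coeff_mk]
  rfl

theorem IsStrictPartitionList.toFinset_sort {L : List ℕ} (hL : IsStrictPartitionList L) :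
    L.toFinset.sort (· ≥ ·) = L :=
  (List.toFinset_sort _ hL.1.nodup).2 (hL.1.imp le_of_lt)

theorem strictBGSet_finite (M : ℕ) (k : ℤ) (n : ℕ) : (strictBGSet M k n).Finite := by
  refine ((range (M + 1)).powerset.finite_toSet.image (·.sort (· ≥ ·))).subset ?_
  rintro L ⟨hL, hM, -⟩
  refine ⟨L.toFinset, ?_, hL.toFinset_sort⟩
  simpa [Set.subset_def, Nat.lt_succ_iff] using hM

theorem strictBGSet_mono {M M' : ℕ} (h : M ≤ M') (k : ℤ) (n : ℕ) :
    strictBGSet M k n ⊆ strictBGSet M' k n :=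
  fun _ ⟨hL, hM, hsum, hk⟩ => ⟨hL, fun x hx => (hM x hx).trans h, hsum, hk⟩

theorem strictBGSet_succ_of_le {M n : ℕ} (k : ℤ) (hn : M + 1 ≤ n) :
    strictBGSet (M + 1) k n = strictBGSet M k n ∪
      List.cons (M + 1) '' strictBGSet M (((M + 1) % 2 : ℕ) - k) (n - (M + 1)) := by
  ext L
  constructor
  · rintro ⟨hL, hM, hsum, hk⟩
    cases L with
    | nil => exact Or.inl ⟨hL, by simp, hsum, hk⟩
    | cons a T =>
      obtain ⟨hlt, -, hT⟩ := isStrictPartitionList_cons.1 hL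
      rcases (hM a List.mem_cons_self).lt_or_eq with haM | rfl
      · refine Or.inl ⟨hL, ?_, hsum, hk⟩
        simp only [List.mem_cons, forall_eq_or_imp]
        exact ⟨by omega, fun x hx => by have := hlt x hx; omega⟩
      · refine Or.inr ⟨T, ⟨hT, fun x hx => by have := hlt x hx; omega, ?_, ?_⟩, rfl⟩
        · simp only [List.sum_cons] at hsum; omega
        · rw [bgRank_cons] at hk; omega
  · rintro (hL | ⟨T, ⟨hL, hM, hsum, hk⟩, rfl⟩)
    · exact strictBGSet_mono (Nat.le_succ M) k n hL
    · have hlt : ∀ x ∈ T, x < M + 1 := fun x hx => Nat.lt_succ_of_le (hM x hx)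
      refine ⟨isStrictPartitionList_cons.2 ⟨hlt, M.succ_pos, hL⟩, ?_, ?_, ?_⟩
      · simp only [List.mem_cons, forall_eq_or_imp]
        exact ⟨le_rfl, fun x hx => (hM x hx).trans (Nat.le_succ M)⟩
      · simp only [List.sum_cons]; omega
      · rw [bgRank_cons]; omega

theorem strictBGSet_succ_of_lt {M n : ℕ} (k : ℤ) (hn : n < M + 1) :
    strictBGSet (M + 1) k n = strictBGSet M k n := by
  refine (Set.Subset.antisymm ?_ (strictBGSet_mono (Nat.le_succ M) k n))
  rintro L ⟨hL, -, hsum, hk⟩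
  refine ⟨hL, fun x hx => ?_, hsum, hk⟩
  have := List.le_sum_of_mem hx
  omega

theorem strictBGgf_succ (M : ℕ) (k : ℤ) :
    strictBGgf (M + 1) k =
      strictBGgf M k + X ^ (M + 1) * strictBGgf M (((M + 1) % 2 : ℕ) - k) := by
  ext n
  rw [map_add, coeff_X_pow_mul', coeff_strictBGgf, coeff_strictBGgf]
  split_ifs with hn
  · have hdisj : Disjoint (strictBGSet M k n)
        (List.cons (M + 1) '' strictBGSet M (((M + 1) % 2 : ℕ) - k) (n - (M + 1))) := by
      rw [Set.disjoint_left]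
      rintro _ ⟨-, hM, -⟩ ⟨T, -, rfl⟩
      exact absurd (hM _ List.mem_cons_self) (Nat.not_succ_le_self M)
    rw [strictBGSet_succ_of_le k hn, coeff_strictBGgf, Set.ncard_union_eq hdisj
      (strictBGSet_finite ..) ((strictBGSet_finite ..).image _),
      Set.ncard_image_of_injective _ List.cons_injective, Nat.cast_add]
  · rw [strictBGSet_succ_of_lt k (by omega), add_zero]

theorem strictBGSet_zero (k : ℤ) (n : ℕ) :
    strictBGSet 0 k n = {L | L = [] ∧ n = 0 ∧ k = 0} := by
  ext L
  constructor
  · rintro ⟨hL, hM, rfl, rfl⟩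
    obtain rfl : L = [] := List.eq_nil_iff_forall_not_mem.2 fun x hx => by
      have := hL.2 x hx; have := hM x hx; omega
    exact ⟨rfl, rfl, rfl⟩
  · rintro ⟨rfl, rfl, rfl⟩
    exact ⟨⟨List.Pairwise.nil, by simp⟩, by simp, rfl, rfl⟩

theorem strictBGgf_zero (k : ℤ) : strictBGgf 0 k = if k = 0 then 1 else 0 := by
  ext n
  rw [coeff_strictBGgf, strictBGSet_zero]
  by_cases h : n = 0 ∧ k = 0
  · obtain ⟨rfl, rfl⟩ := h
    simp
  · rw [Set.eq_empty_of_forall_notMem (s := {L : List ℕ | L = [] ∧ n = 0 ∧ k = 0})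
      fun L hL => h hL.2, Set.ncard_empty, Nat.cast_zero]
    split_ifs with hk
    · simpa [coeff_one, hk] using h
    · simp

theorem constantCoeff_qq2Poch (n : ℕ) : constantCoeff (qq2Poch n) = 1 := by
  simp [qq2Poch, map_prod]

theorem qq2Poch_ne_zero (n : ℕ) : qq2Poch n ≠ 0 := fun h => by
  simpa [h] using constantCoeff_qq2Poch n

theorem qq2Poch_succ (n : ℕ) : qq2Poch (n + 1) = qq2Poch n * (1 - X ^ (2 * (n + 1))) :=
  prod_range_succ _ _

theorem gaussBinom2_eq_zero {m : ℕ} {n : ℤ} (h : n < 0 ∨ (m : ℤ) < n) : gaussBinom2 m n = 0 :=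
  if_neg (by omega)

theorem gaussBinom2_mul_qq2Poch (a b : ℕ) :
    gaussBinom2 (a + b) a * (qq2Poch a * qq2Poch b) = qq2Poch (a + b) := by
  rw [gaussBinom2, if_pos (by omega), Int.toNat_natCast, Nat.add_sub_cancel_left, mul_assoc,
    PowerSeries.inv_mul_cancel _ (by simp [constantCoeff_qq2Poch]), mul_one]

theorem gaussBinom2_eq_of_mul_qq2Poch {a b : ℕ} {f : PowerSeries ℚ}
    (h : f * (qq2Poch a * qq2Poch b) = qq2Poch (a + b)) : gaussBinom2 (a + b) a = f :=
  mul_right_cancel₀ (mul_ne_zero (qq2Poch_ne_zero a) (qq2Poch_ne_zero b))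
    ((gaussBinom2_mul_qq2Poch a b).trans h.symm)

theorem gaussBinom2_zero_right (m : ℕ) : gaussBinom2 m 0 = 1 := by
  simpa using gaussBinom2_eq_of_mul_qq2Poch (a := 0) (b := m) (f := 1) (by simp [qq2Poch])

theorem gaussBinom2_self (m : ℕ) : gaussBinom2 m m = 1 := by
  simpa using gaussBinom2_eq_of_mul_qq2Poch (a := m) (b := 0) (f := 1) (by simp [qq2Poch])

theorem gaussBinom2_zero_left (n : ℤ) : gaussBinom2 0 n = if n = 0 then 1 else 0 := by
  split_ifs with h
  · rw [h, gaussBinom2_zero_right]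
  · exact gaussBinom2_eq_zero (by omega)

theorem gaussBinom2_symm (m : ℕ) (n : ℤ) : gaussBinom2 m n = gaussBinom2 m (m - n) := by
  by_cases h : 0 ≤ n ∧ n ≤ m
  · obtain ⟨a, rfl⟩ := Int.eq_ofNat_of_zero_le h.1
    obtain ⟨b, rfl⟩ := Nat.exists_eq_add_of_le (by omega : a ≤ m)
    rw [show ((a + b : ℕ) : ℤ) - a = b by push_cast; ring, add_comm a b]
    refine (gaussBinom2_eq_of_mul_qq2Poch ?_).symm
    rw [mul_comm (qq2Poch b), add_comm b a, gaussBinom2_mul_qq2Poch]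
  · rw [gaussBinom2_eq_zero (by omega), gaussBinom2_eq_zero (by omega)]

theorem gaussBinom2_succ_natCast (a b : ℕ) :
    gaussBinom2 (a + 1 + b + 1) (a + 1 : ℕ) =
      gaussBinom2 (a + 1 + b) (a + 1 : ℕ) + X ^ (2 * (b + 1)) * gaussBinom2 (a + 1 + b) a := by
  have h₁ := gaussBinom2_mul_qq2Poch (a + 1) b
  have h₂ := gaussBinom2_mul_qq2Poch a (b + 1)
  rw [qq2Poch_succ a] at h₁
  rw [qq2Poch_succ b, show a + (b + 1) = a + 1 + b by omega] at h₂
  refine gaussBinom2_eq_of_mul_qq2Poch (a := a + 1) (b := b + 1) ?_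
  rw [show a + 1 + (b + 1) = a + 1 + b + 1 from rfl, qq2Poch_succ (a + 1 + b), qq2Poch_succ a,
    qq2Poch_succ b]
  linear_combination (1 - X ^ (2 * (b + 1))) * h₁ + X ^ (2 * (b + 1)) * (1 - X ^ (2 * (a + 1))) * h₂

theorem gaussBinom2_succ (m : ℕ) (n : ℤ) :
    gaussBinom2 (m + 1) n =
      gaussBinom2 m n + X ^ (2 * ((m : ℤ) + 1 - n)).toNat * gaussBinom2 m (n - 1) := by
  obtain hn | rfl | hn := lt_trichotomy n 0
  · simp [gaussBinom2_eq_zero (Or.inl hn), gaussBinom2_eq_zero (Or.inl (by omega : n - 1 < 0))]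
  · simp [gaussBinom2_zero_right, gaussBinom2_eq_zero (Or.inl (by omega : (-1 : ℤ) < 0))]
  obtain hm | rfl | hm := lt_trichotomy n (m + 1)
  · obtain ⟨a, rfl⟩ : ∃ a : ℕ, n = a + 1 := ⟨(n - 1).toNat, by omega⟩
    obtain ⟨b, rfl⟩ := Nat.exists_eq_add_of_le (by omega : a + 1 ≤ m)
    have hexp : (2 * (((a + 1 + b : ℕ) : ℤ) + 1 - (a + 1))).toNat = 2 * (b + 1) := by omega
    rw [hexp, add_sub_cancel_right]
    exact_mod_cast gaussBinom2_succ_natCast a b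
  · have := gaussBinom2_self (m + 1)
    push_cast at this
    simp [this, gaussBinom2_self, gaussBinom2_eq_zero (Or.inr (by omega : (m : ℤ) < m + 1))]
  · rw [gaussBinom2_eq_zero (m := m + 1) (Or.inr (by omega)),
      gaussBinom2_eq_zero (m := m) (Or.inr (by omega)),
      gaussBinom2_eq_zero (m := m) (Or.inr (by omega)), mul_zero, add_zero]

theorem gaussBinom2_succ' (m : ℕ) (n : ℤ) :
    gaussBinom2 (m + 1) n = gaussBinom2 m (n - 1) + X ^ (2 * n).toNat * gaussBinom2 m n := by
  rw [gaussBinom2_symm, gaussBinom2_succ, gaussBinom2_symm m, gaussBinom2_symm m (_ - 1)]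
  push_cast
  ring_nf

theorem pow_mul_gaussBinom2_congr {i j m : ℕ} {n : ℤ} (h : 0 ≤ n → n ≤ m → i = j) :
    (X : PowerSeries ℚ) ^ i * gaussBinom2 m n = X ^ j * gaussBinom2 m n := by
  by_cases hn : 0 ≤ n ∧ n ≤ m
  · rw [h hn.1 hn.2]
  · rw [gaussBinom2_eq_zero (by omega), mul_zero, mul_zero]

theorem two_mul_sq_sub_self_nonneg (k : ℤ) : 0 ≤ 2 * k ^ 2 - k := by
  nlinarith [sq_nonneg k, sq_nonneg (k - 1)]

-- The closed forms satisfy the recursion `strictBGgf_succ`, from `M = 2N` and from `M = 2N + 1`.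
theorem gaussBinom2_two_mul_add_one (N : ℕ) (k : ℤ) :
    X ^ (2 * k ^ 2 - k).toNat * gaussBinom2 (2 * N) (N + k) +
        X ^ (2 * N + 1) *
          (X ^ (2 * (1 - k) ^ 2 - (1 - k)).toNat * gaussBinom2 (2 * N) (N + (1 - k))) =
      X ^ (2 * k ^ 2 - k).toNat * gaussBinom2 (2 * N + 1) (N + k) := by
  rw [gaussBinom2_succ, gaussBinom2_symm (2 * N) (N + (1 - k)), mul_add, ← mul_assoc, ← mul_assoc,
    ← pow_add, ← pow_add]
  congr 1
  rw [show ((2 * N : ℕ) : ℤ) - (N + (1 - k)) = N + k - 1 by push_cast; ring]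
  refine pow_mul_gaussBinom2_congr fun h₀ h₁ => ?_
  have hk := two_mul_sq_sub_self_nonneg k
  have hk' := two_mul_sq_sub_self_nonneg (1 - k)
  rw [show 2 * (1 - k) ^ 2 - (1 - k) = 2 * k ^ 2 - k + 1 - 2 * k by ring] at hk' ⊢
  generalize 2 * k ^ 2 - k = t at *
  push_cast at h₁ ⊢
  omega

theorem gaussBinom2_two_mul_add_two (N : ℕ) (k : ℤ) :
    X ^ (2 * k ^ 2 - k).toNat * gaussBinom2 (2 * N + 1) (N + k) +
        X ^ (2 * N + 1 + 1) *
          (X ^ (2 * (0 - k) ^ 2 - (0 - k)).toNat * gaussBinom2 (2 * N + 1) (N + (0 - k))) =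
      X ^ (2 * k ^ 2 - k).toNat * gaussBinom2 (2 * N + 1 + 1) ((N + 1 : ℕ) + k) := by
  rw [gaussBinom2_succ' (2 * N + 1), gaussBinom2_symm (2 * N + 1) (N + (0 - k)), mul_add,
    ← mul_assoc, ← mul_assoc, ← pow_add, ← pow_add,
    show ((N + 1 : ℕ) : ℤ) + k - 1 = N + k by push_cast; ring]
  congr 1
  rw [show ((2 * N + 1 : ℕ) : ℤ) - (N + (0 - k)) = (N + 1 : ℕ) + k by push_cast; ring]
  refine pow_mul_gaussBinom2_congr fun h₀ h₁ => ?_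
  have hk := two_mul_sq_sub_self_nonneg k
  have hk' := two_mul_sq_sub_self_nonneg (0 - k)
  rw [show 2 * (0 - k) ^ 2 - (0 - k) = 2 * k ^ 2 - k + 2 * k by ring] at hk' ⊢
  generalize 2 * k ^ 2 - k = t at *
  push_cast at h₀ ⊢
  omega

theorem strictBGgf_two_mul_add_one_of_two_mul {N : ℕ} (h : ∀ k : ℤ,
      strictBGgf (2 * N) k = X ^ (2 * k ^ 2 - k).toNat * gaussBinom2 (2 * N) (N + k))
    (k : ℤ) :
    strictBGgf (2 * N + 1) k = X ^ (2 * k ^ 2 - k).toNat * gaussBinom2 (2 * N + 1) (N + k) := by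
  rw [strictBGgf_succ, show (2 * N + 1) % 2 = 1 by omega, h, h, Nat.cast_one,
    gaussBinom2_two_mul_add_one]

theorem strictBGgf_two_mul_add_two_of_two_mul_add_one {N : ℕ} (h : ∀ k : ℤ,
      strictBGgf (2 * N + 1) k = X ^ (2 * k ^ 2 - k).toNat * gaussBinom2 (2 * N + 1) (N + k))
    (k : ℤ) :
    strictBGgf (2 * (N + 1)) k =
      X ^ (2 * k ^ 2 - k).toNat * gaussBinom2 (2 * (N + 1)) ((N + 1 : ℕ) + k) := by
  rw [show 2 * (N + 1) = 2 * N + 1 + 1 by ring, strictBGgf_succ,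
    show (2 * N + 1 + 1) % 2 = 0 by omega, h, h, Nat.cast_zero, gaussBinom2_two_mul_add_two]

theorem strictBGgf_two_mul (N : ℕ) (k : ℤ) :
    strictBGgf (2 * N) k = X ^ (2 * k ^ 2 - k).toNat * gaussBinom2 (2 * N) (N + k) := by
  induction N generalizing k with
  | zero =>
    rw [mul_zero, strictBGgf_zero, gaussBinom2_zero_left, Nat.cast_zero, zero_add]
    split_ifs with hk <;> simp [hk]
  | succ N ih =>
    exact strictBGgf_two_mul_add_two_of_two_mul_add_one (strictBGgf_two_mul_add_one_of_two_mul ih) k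

/-- Berkovich–Uncu: B_{2N+ν}(k,q) = q^{2k²−k} [2N+ν choose N+k]_{q²}. -/
theorem berkovich_uncu (N : ℕ) (k : ℤ) (ν : ℕ) (hν : ν = 0 ∨ ν = 1) :
    strictBGgf (2 * N + ν) k =
      (PowerSeries.X : PowerSeries ℚ) ^ (2 * k ^ 2 - k).toNat *
        gaussBinom2 (2 * N + ν) ((N : ℤ) + k) := by
  rcases hν with rfl | rfl
  · exact strictBGgf_two_mul N k
  · exact strictBGgf_two_mul_add_one_of_two_mul (strictBGgf_two_mul N) k
end

section
/- For any integer k, the number of partitions of n into distinct parts with BG-rank equal to k is equal to the number of partitions of (n − 2k² + k)/2 into parts of unrestricted size, counted with all parts doubled; equivalently, Σ_n p_k^d(n) qⁿ = q^{2k²−k} / (q²;q²)_∞, where p_k^d(n) is the number of partitions of n into distinct parts with BG-rank k. -/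
open Finset PowerSeries

/-!
Subtracting the staircase `(r, …, 2, 1)` from a strict partition `L` with `r` parts leaves a
partition `f` into `r` non-negative parts with `|L| = |f| + r(r + 1)/2`, and the BG-rank of `L`
depends only on the numbers `a` and `b` of odd and even parts of `f`. Halving these parts turns
`f` into partitions `α` and `β` into `a` and `b` non-negative parts, with `|f| = 2|α| + a + 2|β|`.
For even `r`, put `α` to the right of an `a × (b + 1)` rectangle and the conjugate of `β` below
it; for odd `r`, put `β ++ [0]` to the right of a `(b + 1) × a` rectangle and the conjugate of `α`
below it. The result is a partition `ν` with `2|ν| = |L| - 2k² + k`. The rectangle's width minus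
its height is `1 - 2k`, resp. `-2k`, so it can be found in `ν` knowing `k`, which inverts the
construction.
-/

namespace StrictBG

lemma antitone_getD {L : List ℕ} (h : L.Pairwise (· ≥ ·)) : Antitone (L.getD · 0) := by
  intro i j hij
  dsimp only
  rcases lt_or_ge j L.length with hj | hj
  · rcases hij.lt_or_eq with hlt | rfl
    · have := List.pairwise_iff_getElem.mp h i j (hlt.trans hj) hj hlt
      rwa [List.getD_eq_getElem _ _ (hlt.trans hj), List.getD_eq_getElem _ _ hj]
    · rfl
  · simp only [List.getD_eq_default _ _ hj, zero_le]

lemma le_getD_zero_of_mem {L : List ℕ} (h : L.Pairwise (· ≥ ·)) {x : ℕ} (hx : x ∈ L) :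
    x ≤ L.getD 0 0 := by
  obtain ⟨i, hi, rfl⟩ := List.mem_iff_getElem.mp hx
  rw [← List.getD_eq_getElem _ 0 hi]
  exact antitone_getD h (Nat.zero_le i)

lemma getD_zero_le_of_pairwise_cons {a : ℕ} {L : List ℕ} (h : (a :: L).Pairwise (· ≥ ·)) :
    L.getD 0 0 ≤ a :=
  antitone_getD h (Nat.zero_le 1)

lemma getD_range_map (g : ℕ → ℕ) (n j : ℕ) :
    ((List.range n).map g).getD j 0 = if j < n then g j else 0 := by
  split_ifs with hj
  · rw [List.getD_eq_getElem _ _ (by simpa using hj)]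
    simp
  · exact List.getD_eq_default _ _ (by simpa using hj)

lemma pairwise_append_zero {L : List ℕ} (h : L.Pairwise (· ≥ ·)) :
    (L ++ [0]).Pairwise (· ≥ ·) :=
  List.pairwise_append.mpr ⟨h, List.pairwise_singleton _ _, by simp⟩

lemma take_eq_range_map_getD {L : List ℕ} {s : ℕ} (h : s ≤ L.length) :
    L.take s = (List.range s).map (L.getD · 0) := by
  apply List.ext_getElem (by simp; omega)
  intro i hi _
  simp only [List.getElem_take, List.getElem_map, List.getElem_range]
  rw [List.getD_eq_getElem]

lemma range_map_getD_self (L : List ℕ) : (List.range L.length).map (L.getD · 0) = L := by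
  rw [← take_eq_range_map_getD le_rfl, List.take_length]

lemma ext_getD_of_pos {L M : List ℕ} (hL : ∀ x ∈ L, 0 < x) (hM : ∀ x ∈ M, 0 < x)
    (h : ∀ i, L.getD i 0 = M.getD i 0) : L = M := by
  have hlen : L.length = M.length := by
    by_contra hne
    rcases Nat.lt_or_gt_of_ne hne with hlt | hlt
    · have := h L.length
      rw [List.getD_eq_default _ _ le_rfl, List.getD_eq_getElem _ _ hlt] at this
      exact (hM _ (List.getElem_mem hlt)).ne this
    · have := h M.length
      rw [List.getD_eq_default _ _ le_rfl, List.getD_eq_getElem _ _ hlt] at this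
      exact (hL _ (List.getElem_mem hlt)).ne' this
  apply List.ext_getElem hlen
  intro i hiL hiM
  rw [← List.getD_eq_getElem _ 0 hiL, ← List.getD_eq_getElem _ 0 hiM]
  exact h i

lemma getD_filter_pos {L : List ℕ} (h : L.Pairwise (· ≥ ·)) (i : ℕ) :
    (L.filter (0 < ·)).getD i 0 = L.getD i 0 := by
  induction L generalizing i with
  | nil => rfl
  | cons a t ih =>
    rcases Nat.eq_zero_or_pos a with rfl | ha
    · have hzero : ∀ x ∈ 0 :: t, x = 0 := by
        intro x hx
        rcases List.mem_cons.mp hx with rfl | hx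
        · rfl
        · exact Nat.le_zero.mp (List.rel_of_pairwise_cons h hx)
      rw [List.filter_eq_nil_iff.mpr (by simpa using hzero), List.eq_replicate_iff.mpr ⟨rfl, hzero⟩]
      simp
    · rw [List.filter_cons_of_pos (by simpa using ha)]
      cases i with
      | zero => rfl
      | succ i => exact ih h.of_cons i

lemma lt_countP_lt_iff {L : List ℕ} (h : L.Pairwise (· ≥ ·)) (i j : ℕ) :
    i < L.countP (j < ·) ↔ j < L.getD i 0 := by
  induction L generalizing i with
  | nil => simp
  | cons a t ih =>
    have hta : ∀ x ∈ t, x ≤ a := fun x hx => List.rel_of_pairwise_cons h hx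
    by_cases hja : j < a
    · cases i with
      | zero => simp [hja]
      | succ i => simp [hja, ih h.of_cons i]
    · have hzero : t.countP (j < ·) = 0 :=
        List.countP_eq_zero.mpr fun x hx => by have := hta x hx; simp; omega
      have hle : (a :: t).getD i 0 ≤ a := by
        simpa using antitone_getD h (Nat.zero_le i)
      simp only [List.countP_cons, hzero, hja, decide_false, Bool.false_eq_true, if_false]
      omega

def conjugate (L : List ℕ) : List ℕ :=
  (List.range (L.getD 0 0)).map fun j => L.countP (j < ·)

lemma getD_conjugate {L : List ℕ} (h : L.Pairwise (· ≥ ·)) (j : ℕ) :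
    (conjugate L).getD j 0 = L.countP (j < ·) := by
  rw [conjugate, getD_range_map]
  split_ifs with hj
  · rfl
  · exact (List.countP_eq_zero.mpr fun x hx => by
      have := le_getD_zero_of_mem h hx; simp; omega).symm

lemma lt_getD_conjugate_iff {L : List ℕ} (h : L.Pairwise (· ≥ ·)) (i j : ℕ) :
    i < (conjugate L).getD j 0 ↔ j < L.getD i 0 := by
  rw [getD_conjugate h, lt_countP_lt_iff h]

lemma pairwise_conjugate (L : List ℕ) : (conjugate L).Pairwise (· ≥ ·) := by
  rw [conjugate, List.pairwise_map]
  exact List.pairwise_lt_range.imp fun hab =>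
    List.countP_mono_left fun x _ hx => by simp at hx ⊢; omega

lemma le_length_of_mem_conjugate {L : List ℕ} {x : ℕ} (hx : x ∈ conjugate L) : x ≤ L.length := by
  obtain ⟨j, -, rfl⟩ := List.mem_map.mp hx
  exact List.countP_le_length

lemma getD_conjugate_conjugate {L : List ℕ} (h : L.Pairwise (· ≥ ·)) (i : ℕ) :
    (conjugate (conjugate L)).getD i 0 = L.getD i 0 :=
  eq_of_forall_lt_iff fun j => by
    rw [lt_getD_conjugate_iff (pairwise_conjugate L), lt_getD_conjugate_iff h]

lemma sum_range_map_countP_lt (L : List ℕ) {H : ℕ} (hH : ∀ x ∈ L, x ≤ H) :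
    ((List.range H).map fun j => L.countP (j < ·)).sum = L.sum := by
  induction L with
  | nil => simp
  | cons a t ih =>
    have hcard : ((List.range H).map fun j => if j < a then 1 else 0).sum = a := by
      have haH := hH a List.mem_cons_self
      change ∑ j ∈ Finset.range H, (if j < a then 1 else 0) = a
      rw [Finset.sum_boole, Nat.cast_id]
      convert Finset.card_range a using 2
      ext x
      simp only [Finset.mem_filter, Finset.mem_range]
      omega
    simp only [List.countP_cons, decide_eq_true_eq, List.sum_map_add,
      ih fun x hx => hH x (List.mem_cons_of_mem a hx), hcard, List.sum_cons]
    omega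

lemma sum_conjugate {L : List ℕ} (h : L.Pairwise (· ≥ ·)) : (conjugate L).sum = L.sum :=
  sum_range_map_countP_lt L fun _ => le_getD_zero_of_mem h

lemma conjugate_filter_pos {L : List ℕ} (h : L.Pairwise (· ≥ ·)) :
    conjugate (L.filter (0 < ·)) = conjugate L := by
  rw [conjugate, conjugate, getD_filter_pos h]
  refine List.map_congr_left fun j _ => ?_
  rw [List.countP_filter]
  exact List.countP_congr fun x _ => by simp; omega

lemma eq_of_perm_of_pairwise_ge {l₁ l₂ : List ℕ} (h : l₁.Perm l₂) (h₁ : l₁.Pairwise (· ≥ ·))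
    (h₂ : l₂.Pairwise (· ≥ ·)) : l₁ = l₂ :=
  h.eq_of_pairwise (fun _ _ _ _ hab hba => le_antisymm hba hab) h₁ h₂

def sortDesc (l : List ℕ) : List ℕ := l.mergeSort (fun a b => decide (a ≥ b))

lemma perm_sortDesc (l : List ℕ) : (sortDesc l).Perm l := List.mergeSort_perm l _

lemma pairwise_sortDesc (l : List ℕ) : (sortDesc l).Pairwise (· ≥ ·) := by
  have := List.pairwise_mergeSort (le := fun a b : ℕ => decide (a ≥ b))
    (fun a b c hab hbc => by simp only [decide_eq_true_eq] at *; omega)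
    (fun a b => by simp only [Bool.or_eq_true, decide_eq_true_eq]; omega) l
  exact this.imp fun h => by simpa using h

def oddHalves (f : List ℕ) : List ℕ := (f.filter (· % 2 = 1)).map (· / 2)

def evenHalves (f : List ℕ) : List ℕ := (f.filter (· % 2 = 0)).map (· / 2)

def mergeHalves (α β : List ℕ) : List ℕ := sortDesc (α.map (2 * · + 1) ++ β.map (2 * ·))

lemma map_oddHalves (f : List ℕ) : (oddHalves f).map (2 * · + 1) = f.filter (· % 2 = 1) := by
  rw [oddHalves, List.map_map]
  exact (List.map_congr_left (g := id) fun x hx => by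
    have := (List.mem_filter.mp hx).2; simp at this ⊢; omega).trans (List.map_id _)

lemma map_evenHalves (f : List ℕ) : (evenHalves f).map (2 * ·) = f.filter (· % 2 = 0) := by
  rw [evenHalves, List.map_map]
  exact (List.map_congr_left (g := id) fun x hx => by
    have := (List.mem_filter.mp hx).2; simp at this ⊢; omega).trans (List.map_id _)

lemma perm_filter_odd_append_filter_even (f : List ℕ) :
    (f.filter (· % 2 = 1) ++ f.filter (· % 2 = 0)).Perm f := by
  convert List.filter_append_perm (fun x => decide (x % 2 = 1)) f using 3
  funext x
  rw [← decide_not]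
  exact decide_eq_decide.mpr (by omega)

lemma length_halves (f : List ℕ) :
    f.length = (oddHalves f).length + (evenHalves f).length := by
  have := (perm_filter_odd_append_filter_even f).length_eq
  rw [← map_oddHalves, ← map_evenHalves] at this
  simpa using this.symm

lemma sum_halves (f : List ℕ) :
    f.sum = 2 * (oddHalves f).sum + (oddHalves f).length + 2 * (evenHalves f).sum := by
  have hodd (l : List ℕ) : (l.map (2 * · + 1)).sum = 2 * l.sum + l.length := by
    induction l with
    | nil => rfl
    | cons a t ih => simp only [List.map_cons, List.sum_cons, ih, List.length_cons]; ring
  have heven (l : List ℕ) : (l.map (2 * ·)).sum = 2 * l.sum := by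
    induction l with
    | nil => rfl
    | cons a t ih => simp only [List.map_cons, List.sum_cons, ih]; ring
  rw [← hodd, ← heven, map_oddHalves, map_evenHalves, ← List.sum_append,
    (perm_filter_odd_append_filter_even f).sum_eq]

lemma pairwise_oddHalves {f : List ℕ} (h : f.Pairwise (· ≥ ·)) :
    (oddHalves f).Pairwise (· ≥ ·) :=
  List.pairwise_map.mpr ((h.filter _).imp fun hab => Nat.div_le_div_right hab)

lemma pairwise_evenHalves {f : List ℕ} (h : f.Pairwise (· ≥ ·)) :
    (evenHalves f).Pairwise (· ≥ ·) :=
  List.pairwise_map.mpr ((h.filter _).imp fun hab => Nat.div_le_div_right hab)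

lemma pairwise_mergeHalves (α β : List ℕ) : (mergeHalves α β).Pairwise (· ≥ ·) :=
  pairwise_sortDesc _

lemma mergeHalves_halves {f : List ℕ} (h : f.Pairwise (· ≥ ·)) :
    mergeHalves (oddHalves f) (evenHalves f) = f := by
  rw [mergeHalves, map_oddHalves, map_evenHalves]
  exact eq_of_perm_of_pairwise_ge ((perm_sortDesc _).trans (perm_filter_odd_append_filter_even f))
    (pairwise_sortDesc _) h

lemma filter_odd_mergeHalves {α : List ℕ} (hα : α.Pairwise (· ≥ ·)) (β : List ℕ) :
    (mergeHalves α β).filter (· % 2 = 1) = α.map (2 * · + 1) := by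
  refine eq_of_perm_of_pairwise_ge ?_ ((pairwise_sortDesc _).filter _)
    (List.pairwise_map.mpr (hα.imp fun hab => by omega))
  refine ((perm_sortDesc _).filter _).trans ?_
  rw [List.filter_append, List.filter_eq_self.mpr (by simp),
    List.filter_eq_nil_iff.mpr (by simp), List.append_nil]

lemma filter_even_mergeHalves (α : List ℕ) {β : List ℕ} (hβ : β.Pairwise (· ≥ ·)) :
    (mergeHalves α β).filter (· % 2 = 0) = β.map (2 * ·) := by
  refine eq_of_perm_of_pairwise_ge ?_ ((pairwise_sortDesc _).filter _)
    (List.pairwise_map.mpr (hβ.imp fun hab => by omega))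
  refine ((perm_sortDesc _).filter _).trans ?_
  rw [List.filter_append, List.filter_eq_nil_iff.mpr (by simp),
    List.filter_eq_self.mpr (by simp), List.nil_append]

lemma oddHalves_mergeHalves {α : List ℕ} (hα : α.Pairwise (· ≥ ·)) (β : List ℕ) :
    oddHalves (mergeHalves α β) = α := by
  rw [oddHalves, filter_odd_mergeHalves hα, List.map_map]
  exact (List.map_congr_left (g := id) fun x _ => by simp; omega).trans (List.map_id _)

lemma evenHalves_mergeHalves (α : List ℕ) {β : List ℕ} (hβ : β.Pairwise (· ≥ ·)) :
    evenHalves (mergeHalves α β) = β := by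
  rw [evenHalves, filter_even_mergeHalves α hβ, List.map_map]
  exact (List.map_congr_left (g := id) fun x _ => by simp).trans (List.map_id _)

lemma countP_zipIdx_succ (p : ℕ × ℕ → Bool) (L : List ℕ) (m : ℕ) :
    ((L.zipIdx (m + 1)).map Prod.swap).countP p =
      ((L.zipIdx m).map Prod.swap).countP fun q => p (q.1 + 1, q.2) := by
  rw [List.zipIdx_succ, List.map_map, List.countP_map, List.countP_map]
  rfl

lemma bgRank_cons (x : ℕ) (L : List ℕ) : bgRank (x :: L) = (x % 2 : ℕ) - bgRank L := by
  simp only [bgRank, ← List.countP_eq_length_filter, List.zipIdx_cons, List.map_cons,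
    Prod.swap_prod_mk, List.countP_cons, countP_zipIdx_succ]
  have hodd : ((L.zipIdx 0).map Prod.swap).countP
        (fun q => q.2 % 2 == 1 && (q.1 + 1) % 2 == 0) =
      ((L.zipIdx 0).map Prod.swap).countP fun q => q.2 % 2 == 1 && q.1 % 2 == 1 :=
    List.countP_congr fun q _ => by simp; omega
  have heven : ((L.zipIdx 0).map Prod.swap).countP
        (fun q => q.2 % 2 == 1 && (q.1 + 1) % 2 == 1) =
      ((L.zipIdx 0).map Prod.swap).countP fun q => q.2 % 2 == 1 && q.1 % 2 == 0 :=
    List.countP_congr fun q _ => by simp; omega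
  rw [hodd, heven]
  rcases Nat.mod_two_eq_zero_or_one x with hx | hx
  · simp [hx]
  · simp [hx]; ring

def addStaircase : List ℕ → List ℕ
  | [] => []
  | a :: f => (a + f.length + 1) :: addStaircase f

def subStaircase : List ℕ → List ℕ
  | [] => []
  | a :: L => (a - (L.length + 1)) :: subStaircase L

@[simp]
lemma length_addStaircase (f : List ℕ) : (addStaircase f).length = f.length := by
  induction f with
  | nil => rfl
  | cons a f ih => simp [addStaircase, ih]

@[simp]
lemma length_subStaircase (L : List ℕ) : (subStaircase L).length = L.length := by
  induction L with
  | nil => rfl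
  | cons a L ih => simp [subStaircase, ih]

lemma subStaircase_addStaircase (f : List ℕ) : subStaircase (addStaircase f) = f := by
  induction f with
  | nil => rfl
  | cons a f ih => simp [addStaircase, subStaircase, ih]

lemma le_of_mem_addStaircase {f : List ℕ} (hf : f.Pairwise (· ≥ ·)) {x : ℕ}
    (hx : x ∈ addStaircase f) : x ≤ f.getD 0 0 + f.length := by
  induction f with
  | nil => simp [addStaircase] at hx
  | cons a f ih =>
    rcases List.mem_cons.mp hx with rfl | hx
    · simp
    · have hhead := getD_zero_le_of_pairwise_cons hf
      have := ih hf.of_cons hx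
      simp only [List.getD_cons_zero, List.length_cons]
      omega

lemma isStrictPartitionList_addStaircase {f : List ℕ} (hf : f.Pairwise (· ≥ ·)) :
    IsStrictPartitionList (addStaircase f) := by
  induction f with
  | nil => exact ⟨List.Pairwise.nil, by simp [addStaircase]⟩
  | cons a f ih =>
    obtain ⟨hpair, hpos⟩ := ih hf.of_cons
    have hhead := getD_zero_le_of_pairwise_cons hf
    refine ⟨List.pairwise_cons.mpr ⟨fun x hx => ?_, hpair⟩, fun x hx => ?_⟩
    · have := le_of_mem_addStaircase hf.of_cons hx
      omega
    · rcases List.mem_cons.mp hx with rfl | hx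
      · omega
      · exact hpos x hx

lemma length_lt_of_isStrictPartitionList_cons {a : ℕ} {L : List ℕ}
    (h : IsStrictPartitionList (a :: L)) : L.length < a := by
  induction L generalizing a with
  | nil => exact h.2 a List.mem_cons_self
  | cons b L ih =>
    have hba : b < a := List.rel_of_pairwise_cons h.1 List.mem_cons_self
    have := ih ⟨h.1.of_cons, fun x hx => h.2 x (List.mem_cons_of_mem a hx)⟩
    simp only [List.length_cons]
    omega

lemma addStaircase_subStaircase {L : List ℕ} (hL : IsStrictPartitionList L) :
    addStaircase (subStaircase L) = L := by
  induction L with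
  | nil => rfl
  | cons a L ih =>
    have := length_lt_of_isStrictPartitionList_cons hL
    simp only [subStaircase, addStaircase, length_subStaircase,
      ih ⟨hL.1.of_cons, fun x hx => hL.2 x (List.mem_cons_of_mem a hx)⟩]
    congr 1
    omega

lemma pairwise_of_pairwise_addStaircase {f : List ℕ} (h : (addStaircase f).Pairwise (· > ·)) :
    f.Pairwise (· ≥ ·) := by
  induction f with
  | nil => exact List.Pairwise.nil
  | cons a f ih =>
    have hf := ih h.of_cons
    refine List.pairwise_cons.mpr ⟨fun x hx => ?_, hf⟩
    cases f with
    | nil => simp at hx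
    | cons b f =>
      have hba := List.rel_of_pairwise_cons h (List.mem_cons_self (a := b + f.length + 1))
      have := le_getD_zero_of_mem hf hx
      simp only [List.length_cons, List.getD_cons_zero] at hba this
      omega

lemma pairwise_subStaircase {L : List ℕ} (hL : IsStrictPartitionList L) :
    (subStaircase L).Pairwise (· ≥ ·) :=
  pairwise_of_pairwise_addStaircase ((addStaircase_subStaircase hL).symm ▸ hL.1)

lemma two_mul_sum_addStaircase (f : List ℕ) :
    2 * (addStaircase f).sum = 2 * f.sum + f.length * (f.length + 1) := by
  induction f with
  | nil => rfl
  | cons a f ih => simp only [addStaircase, List.sum_cons, List.length_cons]; nlinarith [ih]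

-- Both divisions are exact, by the parity condition.
def rankOfCounts (a b : ℕ) : ℤ :=
  if Even (a + b) then ((a : ℤ) - b) / 2 else ((b : ℤ) + 1 - a) / 2

lemma length_oddHalves_cons (x : ℕ) (f : List ℕ) :
    (oddHalves (x :: f)).length = (oddHalves f).length + x % 2 := by
  rcases Nat.mod_two_eq_zero_or_one x with hx | hx <;> simp [oddHalves, hx]

lemma length_evenHalves_cons (x : ℕ) (f : List ℕ) :
    (evenHalves (x :: f)).length = (evenHalves f).length + (1 - x % 2) := by
  rcases Nat.mod_two_eq_zero_or_one x with hx | hx <;> simp [evenHalves, hx]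

lemma bgRank_addStaircase (f : List ℕ) :
    bgRank (addStaircase f) = rankOfCounts (oddHalves f).length (evenHalves f).length := by
  induction f with
  | nil => rfl
  | cons x f ih =>
    have hr := length_halves f
    rw [addStaircase, bgRank_cons, ih, length_oddHalves_cons, length_evenHalves_cons]
    simp only [rankOfCounts, Nat.even_iff]
    split_ifs <;> push_cast <;> omega

/-- The partition made of an `A.length × c` rectangle with the rows `A` to its right and the
columns `B` below it. -/
def glueRect (c : ℕ) (A B : List ℕ) : List ℕ := A.map (· + c) ++ conjugate B

/-- The rows to the right of the `s × c` rectangle in the corner of `ν`. -/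
def rectRight (s c : ℕ) (ν : List ℕ) : List ℕ := (List.range s).map fun i => ν.getD i 0 - c

/-- The first `u` columns of `ν` below its first `s` rows. -/
def rectBelow (u s : ℕ) (ν : List ℕ) : List ℕ :=
  (List.range u).map fun j => (conjugate ν).getD j 0 - s

@[simp]
lemma length_rectRight (s c : ℕ) (ν : List ℕ) : (rectRight s c ν).length = s := by
  simp [rectRight]

@[simp]
lemma length_rectBelow (u s : ℕ) (ν : List ℕ) : (rectBelow u s ν).length = u := by
  simp [rectBelow]

section glueRect

variable {c : ℕ} {A B : List ℕ}

lemma pairwise_glueRect (hA : A.Pairwise (· ≥ ·)) (hBc : B.length ≤ c) :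
    (glueRect c A B).Pairwise (· ≥ ·) := by
  refine List.pairwise_append.mpr ⟨List.pairwise_map.mpr (hA.imp fun h => by omega),
    pairwise_conjugate B, fun x hx y hy => ?_⟩
  obtain ⟨a, -, rfl⟩ := List.mem_map.mp hx
  have := le_length_of_mem_conjugate hy
  omega

lemma sum_glueRect (hB : B.Pairwise (· ≥ ·)) :
    (glueRect c A B).sum = A.sum + A.length * c + B.sum := by
  rw [glueRect, List.sum_append, List.sum_map_add, List.map_const', List.sum_replicate,
    List.map_id', sum_conjugate hB, smul_eq_mul]

lemma getD_glueRect_of_lt {i : ℕ} (hi : i < A.length) :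
    (glueRect c A B).getD i 0 = A.getD i 0 + c := by
  rw [glueRect, List.getD_append _ _ _ _ (by simpa using hi),
    List.getD_eq_getElem _ _ (by simpa using hi), List.getD_eq_getElem _ _ hi, List.getElem_map]

lemma getD_glueRect_of_le {i : ℕ} (hi : A.length ≤ i) :
    (glueRect c A B).getD i 0 = (conjugate B).getD (i - A.length) 0 := by
  rw [glueRect, List.getD_append_right _ _ _ _ (by simpa using hi), List.length_map]

lemma getD_glueRect_le_length {i : ℕ} (hi : A.length ≤ i) :
    (glueRect c A B).getD i 0 ≤ B.length := by
  rw [getD_glueRect_of_le hi]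
  rcases lt_or_ge (i - A.length) (conjugate B).length with hj | hj
  · rw [List.getD_eq_getElem _ _ hj]
    exact le_length_of_mem_conjugate (List.getElem_mem hj)
  · rw [List.getD_eq_default _ _ hj]
    exact Nat.zero_le _

lemma getD_conjugate_glueRect (hA : A.Pairwise (· ≥ ·)) (hB : B.Pairwise (· ≥ ·))
    (hBc : B.length ≤ c) {j : ℕ} (hj : j < c) :
    (conjugate (glueRect c A B)).getD j 0 = A.length + B.getD j 0 := by
  rw [getD_conjugate (pairwise_glueRect hA hBc), glueRect, List.countP_append,
    List.countP_eq_length.mpr (by simp; omega), List.length_map,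
    ← getD_conjugate (pairwise_conjugate B), getD_conjugate_conjugate hB]

lemma rectRight_glueRect {s : ℕ} (hs : s ≤ A.length) :
    rectRight s c (glueRect c A B) = A.take s := by
  rw [rectRight, take_eq_range_map_getD hs]
  exact List.map_congr_left fun i hi => by
    rw [getD_glueRect_of_lt (by simp at hi; omega)]
    omega

lemma rectBelow_glueRect (hA : A.Pairwise (· ≥ ·)) (hB : B.Pairwise (· ≥ ·)) (hBc : B.length ≤ c) :
    rectBelow B.length A.length (glueRect c A B) = B := by
  conv_rhs => rw [← range_map_getD_self B]
  exact List.map_congr_left fun j hj => by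
    rw [getD_conjugate_glueRect hA hB hBc (by simp at hj; omega)]
    omega

end glueRect

lemma rectRight_filter_pos {ν : List ℕ} (hν : ν.Pairwise (· ≥ ·)) (s c : ℕ) :
    rectRight s c (ν.filter (0 < ·)) = rectRight s c ν := by
  simp only [rectRight, getD_filter_pos hν]

lemma rectBelow_filter_pos {ν : List ℕ} (hν : ν.Pairwise (· ≥ ·)) (u s : ℕ) :
    rectBelow u s (ν.filter (0 < ·)) = rectBelow u s ν := by
  rw [rectBelow, rectBelow, conjugate_filter_pos hν]

lemma pairwise_rectRight {ν : List ℕ} (hν : ν.Pairwise (· ≥ ·)) (s c : ℕ) :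
    (rectRight s c ν).Pairwise (· ≥ ·) :=
  List.pairwise_map.mpr (List.pairwise_lt_range.imp fun h => Nat.sub_le_sub_right
    (antitone_getD hν h.le) c)

lemma pairwise_rectBelow (ν : List ℕ) (u s : ℕ) : (rectBelow u s ν).Pairwise (· ≥ ·) :=
  List.pairwise_map.mpr (List.pairwise_lt_range.imp fun h => Nat.sub_le_sub_right
    (antitone_getD (pairwise_conjugate ν) h.le) s)

lemma glueRect_rectRight_rectBelow {ν : List ℕ} (hν : IsPartitionList ν) {s c u : ℕ}
    (hc : ∀ i < s, c ≤ ν.getD i 0) (hu : ν.getD s 0 ≤ u) (huc : u ≤ c) :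
    (glueRect c (rectRight s c ν) (rectBelow u s ν)).filter (0 < ·) = ν := by
  have hglue := pairwise_glueRect (pairwise_rectRight hν.1 s c) (c := c)
    (B := rectBelow u s ν) (by simpa using huc)
  refine ext_getD_of_pos (fun x hx => by simpa using (List.mem_filter.mp hx).2) hν.2 fun i => ?_
  rw [getD_filter_pos hglue]
  rcases lt_or_ge i s with his | his
  · rw [getD_glueRect_of_lt (by simpa using his), rectRight, getD_range_map, if_pos his]
    have := hc i his
    omega
  · rw [getD_glueRect_of_le (by simpa using his), length_rectRight]
    refine eq_of_forall_lt_iff fun x => ?_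
    have hνi : ν.getD i 0 ≤ u := (antitone_getD hν.1 his).trans hu
    rw [lt_getD_conjugate_iff (pairwise_rectBelow ν u s), rectBelow, getD_range_map]
    split_ifs with hx
    · rw [Nat.lt_sub_iff_add_lt, Nat.sub_add_cancel his, lt_getD_conjugate_iff hν.1]
    · omega

lemma sum_filter_pos (L : List ℕ) : (L.filter (0 < ·)).sum = L.sum := by
  induction L with
  | nil => rfl
  | cons a L ih => rcases Nat.eq_zero_or_pos a with rfl | ha <;> simp [*]

lemma exists_getD_add_two_mul_le (k : ℤ) (ν : List ℕ) :
    ∃ i : ℕ, (ν.getD i 0 : ℤ) + 2 * k ≤ i + 1 :=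
  ⟨ν.length + (2 * k).toNat, by rw [List.getD_eq_default _ _ (by omega)]; omega⟩

/-- The least `s` with `ν_s + 2k ≤ s + 1`: the height of the corner rectangle of `ν` whose width
exceeds its height by `1 - 2k` (or `-2k`, if `ν_s + 2k = s + 1`). -/
def cutIndex (k : ℤ) (ν : List ℕ) : ℕ := Nat.find (exists_getD_add_two_mul_le k ν)

lemma getD_cutIndex_add_le (k : ℤ) (ν : List ℕ) :
    (ν.getD (cutIndex k ν) 0 : ℤ) + 2 * k ≤ cutIndex k ν + 1 :=
  Nat.find_spec (exists_getD_add_two_mul_le k ν)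

lemma lt_getD_add_of_lt_cutIndex {k : ℤ} {ν : List ℕ} {i : ℕ} (hi : i < cutIndex k ν) :
    (i : ℤ) + 1 < ν.getD i 0 + 2 * k :=
  lt_of_not_ge (Nat.find_min (exists_getD_add_two_mul_le k ν) hi)

lemma cutIndex_eq {k : ℤ} {ν : List ℕ} {s : ℕ} (hlt : ∀ i < s, (i : ℤ) + 1 < ν.getD i 0 + 2 * k)
    (hs : (ν.getD s 0 : ℤ) + 2 * k ≤ s + 1) : cutIndex k ν = s :=
  (Nat.find_eq_iff _).mpr ⟨hs, fun i hi => not_le.mpr (hlt i hi)⟩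

def assemble (α β : List ℕ) : List ℕ :=
  (if Even (α.length + β.length) then glueRect (β.length + 1) α β
    else glueRect α.length (β ++ [0]) α).filter (0 < ·)

def disassemble (k : ℤ) (ν : List ℕ) : List ℕ × List ℕ :=
  if (ν.getD (cutIndex k ν) 0 : ℤ) + 2 * k = cutIndex k ν + 1 then
    (rectBelow (ν.getD (cutIndex k ν) 0) (cutIndex k ν + 1) ν,
      rectRight (cutIndex k ν) (ν.getD (cutIndex k ν) 0) ν)
  else
    (rectRight (cutIndex k ν) ((cutIndex k ν - 2 * k).toNat + 1) ν,
      rectBelow (cutIndex k ν - 2 * k).toNat (cutIndex k ν) ν)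

section assemble

variable {α β : List ℕ}

lemma isPartitionList_assemble (hα : α.Pairwise (· ≥ ·)) (hβ : β.Pairwise (· ≥ ·)) :
    IsPartitionList (assemble α β) := by
  refine ⟨?_, fun x hx => by simpa using (List.mem_filter.mp hx).2⟩
  unfold assemble
  split_ifs
  exacts [(pairwise_glueRect hα (Nat.le_succ _)).filter _,
    (pairwise_glueRect (pairwise_append_zero hβ) le_rfl).filter _]

lemma sum_assemble (hα : α.Pairwise (· ≥ ·)) (hβ : β.Pairwise (· ≥ ·)) :
    (assemble α β).sum = α.sum + β.sum + α.length * (β.length + 1) := by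
  rw [assemble, sum_filter_pos]
  split_ifs
  · rw [sum_glueRect hβ]; ring
  · rw [sum_glueRect hα, List.sum_append, List.length_append]; simp; ring

lemma disassemble_assemble_of_even (hα : α.Pairwise (· ≥ ·)) (hβ : β.Pairwise (· ≥ ·)) {k : ℤ}
    (heven : Even (α.length + β.length)) (hk : (α.length : ℤ) - β.length = 2 * k) :
    disassemble k (assemble α β) = (α, β) := by
  have hglue := pairwise_glueRect (c := β.length + 1) hα (Nat.le_succ _)
  have hν : (assemble α β).getD α.length 0 ≤ β.length := by
    rw [assemble, if_pos heven, getD_filter_pos hglue]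
    exact getD_glueRect_le_length le_rfl
  have hcut : cutIndex k (assemble α β) = α.length := by
    refine cutIndex_eq (fun i hi => ?_) (by omega)
    rw [assemble, if_pos heven, getD_filter_pos hglue, getD_glueRect_of_lt hi]
    omega
  have hu : (α.length - 2 * k).toNat = β.length := by omega
  rw [disassemble, hcut, if_neg (by omega), hu, assemble, if_pos heven, rectRight_filter_pos hglue,
    rectBelow_filter_pos hglue, rectRight_glueRect le_rfl, List.take_length,
    rectBelow_glueRect hα hβ (Nat.le_succ _)]

lemma disassemble_assemble_of_odd (hα : α.Pairwise (· ≥ ·)) (hβ : β.Pairwise (· ≥ ·)) {k : ℤ}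
    (hodd : ¬ Even (α.length + β.length)) (hk : (β.length : ℤ) + 1 - α.length = 2 * k) :
    disassemble k (assemble α β) = (α, β) := by
  have hglue := pairwise_glueRect (c := α.length) (pairwise_append_zero hβ) le_rfl
  have hmid : (assemble α β).getD β.length 0 = α.length := by
    rw [assemble, if_neg hodd, getD_filter_pos hglue, getD_glueRect_of_lt (by simp)]
    simp
  have hcut : cutIndex k (assemble α β) = β.length := by
    refine cutIndex_eq (fun i hi => ?_) (by omega)
    rw [assemble, if_neg hodd, getD_filter_pos hglue, getD_glueRect_of_lt (by simp; omega),
      List.getD_append _ _ _ _ hi]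
    omega
  rw [disassemble, hcut, hmid, if_pos (by omega), assemble, if_neg hodd,
    rectRight_filter_pos hglue, rectBelow_filter_pos hglue, rectRight_glueRect (by simp),
    List.take_left' rfl, show β.length + 1 = (β ++ [0]).length by simp,
    rectBelow_glueRect (pairwise_append_zero hβ) hα le_rfl]

lemma disassemble_assemble (hα : α.Pairwise (· ≥ ·)) (hβ : β.Pairwise (· ≥ ·)) {k : ℤ}
    (hk : rankOfCounts α.length β.length = k) : disassemble k (assemble α β) = (α, β) := by
  unfold rankOfCounts at hk
  split_ifs at hk with h
  · exact disassemble_assemble_of_even hα hβ h (by have := Nat.even_iff.mp h; omega)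
  · exact disassemble_assemble_of_odd hα hβ h (by rw [Nat.even_iff] at h; omega)

end assemble

section disassemble

variable {k : ℤ} {ν : List ℕ}

lemma pairwise_disassemble (hν : ν.Pairwise (· ≥ ·)) :
    (disassemble k ν).1.Pairwise (· ≥ ·) ∧ (disassemble k ν).2.Pairwise (· ≥ ·) := by
  unfold disassemble
  split_ifs
  exacts [⟨pairwise_rectBelow _ _ _, pairwise_rectRight hν _ _⟩,
    ⟨pairwise_rectRight hν _ _, pairwise_rectBelow _ _ _⟩]

lemma rankOfCounts_disassemble (k : ℤ) (ν : List ℕ) :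
    rankOfCounts (disassemble k ν).1.length (disassemble k ν).2.length = k := by
  have hle := getD_cutIndex_add_le k ν
  unfold disassemble rankOfCounts
  split_ifs with hhit heven heven <;>
    simp only [length_rectRight, length_rectBelow, Nat.even_iff] at heven ⊢ <;> omega

lemma assemble_disassemble (hν : IsPartitionList ν) :
    assemble (disassemble k ν).1 (disassemble k ν).2 = ν := by
  have hle := getD_cutIndex_add_le k ν
  have hmin {i : ℕ} (hi : i < cutIndex k ν) := lt_getD_add_of_lt_cutIndex hi
  have hanti {i j : ℕ} (hij : i ≤ j) : ν.getD j 0 ≤ ν.getD i 0 := antitone_getD hν.1 hij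
  unfold disassemble
  set s := cutIndex k ν
  split_ifs with hhit
  · set T := ν.getD s 0
    have hodd : ¬ Even (T + s) := by rw [Nat.even_iff]; omega
    have hrows : rectRight s T ν ++ [0] = rectRight (s + 1) T ν := by
      simp [rectRight, List.range_succ, T]
    rw [assemble, length_rectBelow, length_rectRight, if_neg hodd, hrows]
    exact glueRect_rectRight_rectBelow hν (fun i hi => hanti (by omega)) (hanti (by omega)) le_rfl
  · set u := ((s : ℤ) - 2 * k).toNat
    have heven : Even (s + u) := by rw [Nat.even_iff]; omega
    rw [assemble, length_rectBelow, length_rectRight, if_pos heven]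
    refine glueRect_rectRight_rectBelow hν (fun i hi => ?_) (by omega) (by omega)
    have := hmin (show s - 1 < s by omega)
    have := hanti (show i ≤ s - 1 by omega)
    omega

end disassemble

def strictToPartition (L : List ℕ) : List ℕ :=
  assemble (oddHalves (subStaircase L)) (evenHalves (subStaircase L))

def partitionToStrict (k : ℤ) (ν : List ℕ) : List ℕ :=
  addStaircase (mergeHalves (disassemble k ν).1 (disassemble k ν).2)

lemma two_mul_rankOfCounts_sq_sub (a b : ℕ) :
    2 * (2 * rankOfCounts a b ^ 2 - rankOfCounts a b) =
      ((a + b) * (a + b + 1) + 2 * a - 4 * a * (b + 1) : ℤ) := by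
  unfold rankOfCounts
  split_ifs with h
  · obtain ⟨m, hm⟩ : ∃ m : ℤ, (a : ℤ) - b = 2 * m := ⟨((a : ℤ) - b) / 2, by
      have := Nat.even_iff.mp h; omega⟩
    rw [hm, show (a : ℤ) = b + 2 * m by omega, Int.mul_ediv_cancel_left _ two_ne_zero]
    ring
  · obtain ⟨m, hm⟩ : ∃ m : ℤ, (b : ℤ) + 1 - a = 2 * m := ⟨((b : ℤ) + 1 - a) / 2, by
      have := Nat.odd_iff.mp (Nat.not_even_iff_odd.mp h); omega⟩
    rw [hm, show (b : ℤ) = a + 2 * m - 1 by omega, Int.mul_ediv_cancel_left _ two_ne_zero]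
    ring

section strictToPartition

variable {L : List ℕ} (hL : IsStrictPartitionList L)
include hL

lemma isPartitionList_strictToPartition : IsPartitionList (strictToPartition L) :=
  isPartitionList_assemble (pairwise_oddHalves (pairwise_subStaircase hL))
    (pairwise_evenHalves (pairwise_subStaircase hL))

lemma bgRank_eq_rankOfCounts :
    bgRank L = rankOfCounts (oddHalves (subStaircase L)).length
      (evenHalves (subStaircase L)).length := by
  rw [← bgRank_addStaircase, addStaircase_subStaircase hL]

lemma two_mul_sum_strictToPartition :
    2 * ((strictToPartition L).sum : ℤ) = L.sum - (2 * bgRank L ^ 2 - bgRank L) := by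
  have hf := pairwise_subStaircase hL
  have hsumL := two_mul_sum_addStaircase (subStaircase L)
  rw [addStaircase_subStaircase hL, length_halves (subStaircase L),
    sum_halves (subStaircase L)] at hsumL
  have hk := two_mul_rankOfCounts_sq_sub (oddHalves (subStaircase L)).length
    (evenHalves (subStaircase L)).length
  rw [strictToPartition, sum_assemble (pairwise_oddHalves hf) (pairwise_evenHalves hf),
    bgRank_eq_rankOfCounts hL]
  generalize (oddHalves (subStaircase L)).length = a at *
  generalize (evenHalves (subStaircase L)).length = b at *
  generalize (oddHalves (subStaircase L)).sum = x at *
  generalize (evenHalves (subStaircase L)).sum = y at *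
  generalize L.sum = n at *
  zify at hsumL
  push_cast
  linarith

lemma partitionToStrict_strictToPartition :
    partitionToStrict (bgRank L) (strictToPartition L) = L := by
  have hf := pairwise_subStaircase hL
  rw [partitionToStrict, strictToPartition, bgRank_eq_rankOfCounts hL,
    disassemble_assemble (pairwise_oddHalves hf) (pairwise_evenHalves hf) rfl,
    mergeHalves_halves hf, addStaircase_subStaircase hL]

end strictToPartition

lemma isStrictPartitionList_partitionToStrict (k : ℤ) (ν : List ℕ) :
    IsStrictPartitionList (partitionToStrict k ν) :=
  isStrictPartitionList_addStaircase (pairwise_mergeHalves _ _)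

section partitionToStrict

variable {ν : List ℕ}

lemma bgRank_partitionToStrict (k : ℤ) (hν : ν.Pairwise (· ≥ ·)) :
    bgRank (partitionToStrict k ν) = k := by
  obtain ⟨h₁, h₂⟩ := pairwise_disassemble (k := k) hν
  rw [partitionToStrict, bgRank_addStaircase, oddHalves_mergeHalves h₁, evenHalves_mergeHalves _ h₂,
    rankOfCounts_disassemble]

lemma strictToPartition_partitionToStrict (k : ℤ) (hν : IsPartitionList ν) :
    strictToPartition (partitionToStrict k ν) = ν := by
  obtain ⟨h₁, h₂⟩ := pairwise_disassemble (k := k) hν.1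
  rw [strictToPartition, partitionToStrict, subStaircase_addStaircase, oddHalves_mergeHalves h₁,
    evenHalves_mergeHalves _ h₂, assemble_disassemble hν]

end partitionToStrict

end StrictBG

open StrictBG

/-- the number of strict partitions of `n` with BG-rank `k` equals the number of
partitions of `(n − 2k² + k)/2` (with unrestricted parts), i.e. partitions `P` with
`2|P| = n − 2k² + k`. -/
theorem strictBG_eq_unrestricted (k : ℤ) (n : ℕ) :
    Set.ncard {L : List ℕ | IsStrictPartitionList L ∧ L.sum = n ∧ bgRank L = k} =
    Set.ncard {P : List ℕ | IsPartitionList P ∧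
        2 * (P.sum : ℤ) = (n : ℤ) - (2 * k ^ 2 - k)} := by
  rw [← Nat.card_coe_set_eq, ← Nat.card_coe_set_eq]
  refine Nat.card_congr
    { toFun := fun L => ⟨strictToPartition L, isPartitionList_strictToPartition L.2.1, ?_⟩
      invFun := fun ν => ⟨partitionToStrict k ν, isStrictPartitionList_partitionToStrict k ν, ?_,
        bgRank_partitionToStrict k ν.2.1.1⟩
      left_inv := fun L => Subtype.ext ?_
      right_inv := fun ν => Subtype.ext (strictToPartition_partitionToStrict k ν.2.1) }
  · obtain ⟨hL, hsum, hk⟩ := L.2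
    rw [two_mul_sum_strictToPartition hL, hsum, hk]
  · have h := two_mul_sum_strictToPartition (isStrictPartitionList_partitionToStrict k ν)
    rw [strictToPartition_partitionToStrict k ν.2.1, bgRank_partitionToStrict k ν.2.1.1, ν.2.2] at h
    exact_mod_cast (by linarith : ((partitionToStrict k ν).sum : ℤ) = n)
  · obtain ⟨hL, -, hk⟩ := L.2
    simpa only [hk] using partitionToStrict_strictToPartition hL
end

section
/- Let λ = (λ₁ > λ₂ > … > λ_r) be a partition into distinct parts, and let c₁, c₂, …, c_{λ₁} be the column lengths (from left to right) of the shifted Young diagram of λ (row i is indented i−1 boxes). Then there exists a unique integer m with 0 ≤ m ≤ r such that Σ_{i=1}^{m} (−1)^i c_i = Σ_{i=1}^{λ₁} (−1)^i c_i. -/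
open Finset PowerSeries

/-! Distinct positive parts force `λᵢ ≥ r - i + 1`, so the first `r` columns have lengths
`cⱼ = j` and the partial sums for `m ≤ r` run through `0, -1, 1, -2, 2, …`: they are
`Equiv.intEquivNat.symm m`, which gives uniqueness. Past column `r` the column lengths are
non-increasing and at most `r`, so the rest of the alternating sum lies in `[0, r]` up to sign;
this keeps the full sum among the values already taken by some `m ≤ r`. -/

theorem Antitone.sum_range_alternating_mem_Icc {E : Type*} [Ring E] [PartialOrder E]
    [IsOrderedRing E] {f : ℕ → E} (hf : Antitone f) (hf0 : ∀ i, 0 ≤ f i) (n : ℕ) :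
    ∑ i ∈ range n, (-1) ^ i * f i ∈ Set.Icc 0 (f 0) := by
  induction n generalizing f with
  | zero => simpa using hf0 0
  | succ n ih =>
    obtain ⟨hlo, hhi⟩ := ih (f := fun i ↦ f (i + 1)) (fun i j hij ↦ hf (by omega)) (fun i ↦ hf0 _)
    have hf01 : f 1 ≤ f 0 := hf zero_le_one
    simp only [sum_range_succ', pow_succ, mul_neg_one, neg_mul, sum_neg_distrib, pow_zero,
      one_mul, zero_add, Set.mem_Icc] at hlo hhi ⊢
    rw [neg_add_eq_sub]
    exact ⟨sub_nonneg.mpr (hhi.trans hf01), sub_le_self _ hlo⟩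

namespace Equiv

theorem intEquivNat_natCast (k : ℕ) : intEquivNat k = 2 * k := rfl

theorem intEquivNat_negSucc (k : ℕ) : intEquivNat (Int.negSucc k) = 2 * k + 1 := rfl

theorem intEquivNat_symm_two_mul (k : ℕ) : intEquivNat.symm (2 * k) = k := by
  rw [symm_apply_eq, intEquivNat_natCast]

theorem intEquivNat_symm_two_mul_add_one (k : ℕ) : intEquivNat.symm (2 * k + 1) = -(k + 1) := by
  rw [symm_apply_eq, ← Int.negSucc_eq, intEquivNat_negSucc]

theorem intEquivNat_symm_succ (n : ℕ) :
    intEquivNat.symm (n + 1) = intEquivNat.symm n + (-1) ^ (n + 1) * (n + 1 : ℕ) := by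
  obtain ⟨k, rfl | rfl⟩ := Nat.even_or_odd' n
  · rw [intEquivNat_symm_two_mul, intEquivNat_symm_two_mul_add_one, pow_succ, pow_mul]
    push_cast
    ring
  · rw [show 2 * k + 1 + 1 = 2 * (k + 1) by ring, intEquivNat_symm_two_mul,
      intEquivNat_symm_two_mul_add_one, pow_mul]
    push_cast
    ring

theorem intEquivNat_le_iff {v : ℤ} {n : ℕ} :
    intEquivNat v ≤ n ↔ -(n + 1 : ℤ) ≤ 2 * v ∧ 2 * v ≤ n := by
  cases v with
  | ofNat k => rw [Int.ofNat_eq_natCast, intEquivNat_natCast]; omega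
  | negSucc k => rw [intEquivNat_negSucc]; omega

end Equiv

theorem shiftedCol_le_length (L : List ℕ) (j : ℕ) : shiftedCol L j ≤ L.length :=
  (card_filter_le _ _).trans (card_range _).le

theorem shiftedCol_antitone_of_length_le (L : List ℕ) {j j' : ℕ} (hj : L.length ≤ j)
    (hjj' : j ≤ j') : shiftedCol L j' ≤ shiftedCol L j := by
  refine card_le_card fun i hi ↦ ?_
  simp only [mem_filter, mem_range] at hi ⊢
  omega

theorem altColSum_add (L : List ℕ) (m t : ℕ) :
    altColSum L (m + t) =
      altColSum L m +
        (-1) ^ (m + 1) * ∑ j ∈ range t, (-1) ^ j * (shiftedCol L (m + 1 + j) : ℤ) := by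
  rw [altColSum, altColSum, sum_range_add, mul_sum]
  congr 1
  refine sum_congr rfl fun j _ ↦ ?_
  rw [show m + j + 1 = m + 1 + j by ring, pow_add]
  ring

namespace IsStrictPartitionList

variable {L : List ℕ}

theorem tail {a : ℕ} (hL : IsStrictPartitionList (a :: L)) : IsStrictPartitionList L :=
  ⟨hL.1.of_cons, fun x hx ↦ hL.2 x (List.mem_cons_of_mem a hx)⟩

theorem length_sub_le_getD (hL : IsStrictPartitionList L) (i : ℕ) :
    L.length - i ≤ L.getD i 0 := by
  induction L generalizing i with
  | nil => simp
  | cons a l ih =>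
    cases i with
    | succ i => simpa using ih hL.tail i
    | zero =>
      cases l with
      | nil =>
        have := hL.2 a (by simp)
        simp only [List.length_cons, List.length_nil, List.getD_cons_zero]
        omega
      | cons b l =>
        have hb : b < a := List.rel_of_pairwise_cons hL.1 (by simp)
        have := ih hL.tail 0
        simp only [List.length_cons, List.getD_cons_zero] at this ⊢
        omega

theorem length_le_headI (hL : IsStrictPartitionList L) : L.length ≤ L.headI := by
  cases L with
  | nil => rfl
  | cons a l => simpa using hL.length_sub_le_getD 0

theorem shiftedCol_eq_self (hL : IsStrictPartitionList L) {j : ℕ} (hj : j ≤ L.length) :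
    shiftedCol L j = j := by
  rw [shiftedCol]
  convert card_range j using 2
  ext i
  simp only [mem_filter, mem_range]
  have := hL.length_sub_le_getD i
  omega

theorem altColSum_eq_intEquivNat_symm (hL : IsStrictPartitionList L) {m : ℕ}
    (hm : m ≤ L.length) : altColSum L m = Equiv.intEquivNat.symm m := by
  induction m with
  | zero => simp [altColSum, Equiv.intEquivNat_symm_two_mul 0]
  | succ m ih =>
    rw [altColSum, sum_range_succ, ← altColSum, ih (by omega), hL.shiftedCol_eq_self hm,
      Equiv.intEquivNat_symm_succ]

theorem intEquivNat_altColSum_headI_le (hL : IsStrictPartitionList L) :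
    Equiv.intEquivNat (altColSum L L.headI) ≤ L.length := by
  obtain ⟨t, ht⟩ := Nat.exists_eq_add_of_le hL.length_le_headI
  obtain ⟨hT0, hT1⟩ := Antitone.sum_range_alternating_mem_Icc
    (f := fun j ↦ (shiftedCol L (L.length + 1 + j) : ℤ))
    (fun i j hij ↦ Nat.cast_le.mpr (shiftedCol_antitone_of_length_le L
      (by omega : L.length ≤ L.length + 1 + i) (by omega : L.length + 1 + i ≤ L.length + 1 + j)))
    (fun _ ↦ by positivity) t
  have hc := shiftedCol_le_length L (L.length + 1)
  rw [ht, altColSum_add, hL.altColSum_eq_intEquivNat_symm le_rfl, Equiv.intEquivNat_le_iff]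
  simp only [add_zero] at hT1
  generalize ∑ j ∈ range t, (-1 : ℤ) ^ j * (shiftedCol L (L.length + 1 + j) : ℤ) = T
    at hT0 hT1 ⊢
  generalize shiftedCol L (L.length + 1) = c at hc hT1
  obtain ⟨k, hk | hk⟩ := Nat.even_or_odd' L.length <;> rw [hk] at hc ⊢
  · rw [Equiv.intEquivNat_symm_two_mul, pow_succ, pow_mul, neg_one_sq, one_pow]
    push_cast
    omega
  · rw [Equiv.intEquivNat_symm_two_mul_add_one, show 2 * k + 1 + 1 = 2 * (k + 1) by ring,
      pow_mul, neg_one_sq, one_pow]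
    push_cast
    omega

end IsStrictPartitionList

/-- there is a unique `m` with `0 ≤ m ≤ r` such that the alternating sum of the
first `m` shifted column lengths equals the full alternating sum. -/
theorem exists_unique_split (L : List ℕ) (hL : IsStrictPartitionList L) :
    ∃! m : ℕ, m ≤ L.length ∧ altColSum L m = altColSum L L.headI := by
  have hle := hL.intEquivNat_altColSum_headI_le
  refine ⟨Equiv.intEquivNat (altColSum L L.headI), ⟨hle, ?_⟩, ?_⟩
  · rw [hL.altColSum_eq_intEquivNat_symm hle, Equiv.symm_apply_apply]
  · rintro m ⟨hm, hsum⟩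
    rw [← hsum, hL.altColSum_eq_intEquivNat_symm hm, Equiv.apply_symm_apply]
end

section
/- Let λ be a partition into distinct parts with column-length sequence c₁, …, c_{λ₁} of its shifted Young diagram, and let a be the unique integer with 0 ≤ a ≤ #(λ) such that Σ_{i=1}^{a} (−1)^i c_i = Σ_{i=1}^{λ₁} (−1)^i c_i. If the BG-rank of λ is k, then a = −2k if k ≤ 0, and a = 2k − 1 if k > 0. -/
open Finset PowerSeries

/-! Because the parts are distinct and positive, row `i` (0-based) of the shifted diagram ends in
a column between `ℓ(λ)` and `λ₁`. Hence `c_j = j` for `j ≤ ℓ(λ)`, so the partial sum up to `a` is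
`a/2` or `-(a+1)/2` according to the parity of `a`; and summing the signs `(-1)^j` over the cells
row by row, row `i` contributes `(-1)^(i+1)` if `λ_i` is odd and `0` otherwise, so the full sum
is `-k`. -/

theorem List.length_filter_map_swap_zipIdx {α : Type*} (P : ℕ × α → Bool) (d : α) :
    ∀ (L : List α) (s : ℕ), (((L.zipIdx s).map Prod.swap).filter P).length
      = ∑ i ∈ Finset.range L.length, if P (s + i, L.getD i d) then 1 else 0
  | [], _ => by simp
  | x :: L, s => by
    rw [List.zipIdx_cons, List.map_cons, List.filter_cons, List.length_cons, Finset.sum_range_succ']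
    simp only [List.getD_cons_zero, List.getD_cons_succ, add_zero, Prod.swap_prod_mk, ← add_assoc,
      add_right_comm s _ 1, ← List.length_filter_map_swap_zipIdx P d L (s + 1)]
    split_ifs <;> simp

theorem bgRank_eq_sum (L : List ℕ) :
    bgRank L = ∑ i ∈ range L.length, if L.getD i 0 % 2 = 1 then (-1 : ℤ) ^ i else 0 := by
  rw [bgRank, List.length_filter_map_swap_zipIdx _ 0, List.length_filter_map_swap_zipIdx _ 0]
  push_cast
  rw [← sum_sub_distrib]
  refine sum_congr rfl fun i _ => ?_
  rcases Nat.even_or_odd i with hi | hi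
  · simp [Nat.even_iff.mp hi, hi.neg_one_pow]
  · simp [Nat.odd_iff.mp hi, hi.neg_one_pow, apply_ite Neg.neg]

theorem List.getD_add_add_le_getD {L : List ℕ} (hL : L.Pairwise (· > ·)) :
    ∀ {i k : ℕ}, i + k < L.length → L.getD (i + k) 0 + k ≤ L.getD i 0
  | _, 0, _ => le_rfl
  | i, k + 1, h => by
    have hstep : L.getD (i + k + 1) 0 < L.getD (i + k) 0 := by
      rw [List.getD_eq_getElem _ _ (by omega), List.getD_eq_getElem _ _ (by omega)]
      exact List.pairwise_iff_getElem.mp hL _ _ _ _ (by omega)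
    have := List.getD_add_add_le_getD hL (i := i) (k := k) (by omega)
    show L.getD (i + k + 1) 0 + (k + 1) ≤ _
    omega

theorem List.add_getD_le_headI {L : List ℕ} (hL : L.Pairwise (· > ·)) {i : ℕ}
    (hi : i < L.length) : i + L.getD i 0 ≤ L.headI := by
  obtain _ | ⟨x, L⟩ := L
  · simp at hi
  · simpa [add_comm i] using List.getD_add_add_le_getD hL (i := 0) (k := i) (by simpa using hi)

theorem IsStrictPartitionList.length_le_add_getD {L : List ℕ} (hL : IsStrictPartitionList L)
    {i : ℕ} (hi : i < L.length) : L.length ≤ i + L.getD i 0 := by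
  have hdrop := List.getD_add_add_le_getD hL.1 (i := i) (k := L.length - 1 - i) (by omega)
  have hlast : 0 < L.getD (i + (L.length - 1 - i)) 0 := by
    rw [List.getD_eq_getElem _ _ (by omega)]
    exact hL.2 _ (List.getElem_mem _)
  omega

theorem IsStrictPartitionList.shiftedCol_eq {L : List ℕ} (hL : IsStrictPartitionList L) {j : ℕ}
    (hj : j ≤ L.length) : shiftedCol L j = j := by
  have hrows : (range L.length).filter (fun i => i + 1 ≤ j ∧ j ≤ i + L.getD i 0) = range j := by
    ext i
    simp only [mem_filter, mem_range]
    constructor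
    · rintro ⟨_, hij, _⟩
      omega
    · intro hij
      have := hL.length_le_add_getD (i := i) (by omega)
      omega
  rw [shiftedCol, hrows, card_range]

theorem IsStrictPartitionList.altColSum_of_le_length {L : List ℕ} (hL : IsStrictPartitionList L)
    {a : ℕ} (ha : a ≤ L.length) :
    altColSum L a = ∑ i ∈ range a, (-1 : ℤ) ^ (i + 1) * (i + 1) := by
  refine sum_congr rfl fun i hi => ?_
  rw [hL.shiftedCol_eq (by simp at hi; omega)]
  push_cast
  rfl

theorem sum_Ico_neg_one_pow_succ (i n : ℕ) :
    ∑ j ∈ Ico i (i + n), (-1 : ℤ) ^ (j + 1) = if Even n then 0 else (-1) ^ (i + 1) := by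
  rw [sum_Ico_eq_sum_range, Nat.add_sub_cancel_left]
  simp only [pow_succ, pow_add, ← sum_mul, ← mul_sum, neg_one_geom_sum]
  split_ifs <;> simp

theorem altColSum_eq_sum_rows {L : List ℕ} {N : ℕ} (hN : ∀ i < L.length, i + L.getD i 0 ≤ N) :
    altColSum L N = ∑ i ∈ range L.length, ∑ j ∈ Ico i (i + L.getD i 0), (-1 : ℤ) ^ (j + 1) := by
  simp only [altColSum, shiftedCol, card_filter, Nat.cast_sum, Nat.cast_ite, Nat.cast_one,
    Nat.cast_zero, mul_sum, mul_ite, mul_one, mul_zero]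
  rw [sum_comm]
  refine sum_congr rfl fun i hi => ?_
  rw [← sum_filter]
  refine sum_congr ?_ fun _ _ => rfl
  ext j
  have := hN i (mem_range.mp hi)
  simp only [mem_filter, mem_range, mem_Ico]
  omega

theorem altColSum_headI {L : List ℕ} (hL : L.Pairwise (· > ·)) :
    altColSum L L.headI = -bgRank L := by
  rw [altColSum_eq_sum_rows fun i hi => List.add_getD_le_headI hL hi, bgRank_eq_sum,
    ← sum_neg_distrib]
  refine sum_congr rfl fun i _ => ?_
  simp only [sum_Ico_neg_one_pow_succ, Nat.even_iff, apply_ite Neg.neg, neg_zero]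
  split_ifs <;> omega

theorem sum_range_two_mul_neg_one_pow_mul_succ (m : ℕ) :
    ∑ i ∈ range (2 * m), (-1 : ℤ) ^ (i + 1) * (i + 1) = m := by
  induction m with
  | zero => simp
  | succ m ih =>
    rw [show 2 * (m + 1) = 2 * m + 1 + 1 by ring, sum_range_succ, sum_range_succ, ih]
    simp only [pow_succ, pow_mul]
    push_cast
    ring

theorem sum_range_two_mul_add_one_neg_one_pow_mul_succ (m : ℕ) :
    ∑ i ∈ range (2 * m + 1), (-1 : ℤ) ^ (i + 1) * (i + 1) = -(m + 1) := by
  rw [sum_range_succ, sum_range_two_mul_neg_one_pow_mul_succ]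
  simp only [pow_succ, pow_mul]
  push_cast
  ring

/-- for a strict partition with BG-rank `k`, the split index `a` satisfies
`a = −2k` if `k ≤ 0` and `a = 2k − 1` if `k > 0`. -/
theorem split_index_eq (L : List ℕ) (hL : IsStrictPartitionList L) (a : ℕ)
    (ha : a ≤ L.length ∧ altColSum L a = altColSum L L.headI)
    (k : ℤ) (hk : bgRank L = k) :
    (a : ℤ) = if k ≤ 0 then -2 * k else 2 * k - 1 := by
  obtain ⟨haL, hsplit⟩ := ha
  have hsum : ∑ i ∈ range a, (-1 : ℤ) ^ (i + 1) * (i + 1) = -k := by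
    rw [← hL.altColSum_of_le_length haL, hsplit, altColSum_headI hL.1, hk]
  obtain ⟨m, rfl | rfl⟩ := Nat.even_or_odd' a
  · rw [sum_range_two_mul_neg_one_pow_mul_succ] at hsum
    rw [if_pos (by omega)]
    push_cast
    omega
  · rw [sum_range_two_mul_add_one_neg_one_pow_mul_succ] at hsum
    rw [if_neg (by omega)]
    push_cast
    omega
end

section
/- Fix integers a ≥ 0 and b ≥ 1. Let Δ = (d₁, …, d_l) be an (a,b)-sequence, i.e., d_i = a + i for 1 ≤ i ≤ b, (d_i)_{i ≥ b} is non-increasing with positive entries, and Σ_{i=1}^{l} (−1)^i d_i = 0. Define b₁ = d₁ and b_i = d_i − b_{i−1} for 2 ≤ i ≤ l. Then all b_i ≥ 0, b_l = 0, and Σ_{i=1}^{l} d_i = 2 Σ_{i=1}^{l} b_i; in particular |Δ| = Σ d_i is even. -/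
open Finset PowerSeries

lemma listSum_eq (d : List ℕ) :
    d.sum = ∑ i ∈ Finset.range d.length, d.getD i 0 := by
  induction d with
  | nil => simp
  | cons x t ih =>
      rw [List.sum_cons, List.length_cons, Finset.sum_range_succ']
      simp [List.getD_cons_succ, List.getD_cons_zero, ih, add_comm]

lemma bAux_prefix (d : List ℕ) : ∀ n, (-1:ℤ)^n * bAux d n
    = ∑ i ∈ Finset.range (n+1), (-1:ℤ)^i * (d.getD i 0 : ℤ)
  | 0 => by simp [bAux]
  | n+1 => by
      rw [Finset.sum_range_succ, ← bAux_prefix d n]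
      show (-1:ℤ)^(n+1) * ((d.getD (n+1) 0 : ℤ) - bAux d n) = _
      ring

lemma alt_nonneg (g : ℕ → ℤ) (h0 : ∀ j, 0 ≤ g j) (h1 : ∀ j, g (j+1) ≤ g j) :
    ∀ k, 0 ≤ ∑ j ∈ Finset.range k, (-1:ℤ)^j * g j
  | 0 => by simp
  | 1 => by simpa using h0 0
  | (k+2) => by
      have ih := alt_nonneg (fun j => g (j+2)) (fun j => h0 _) (fun j => h1 _) k
      rw [Finset.sum_range_succ', Finset.sum_range_succ']
      have e : ∀ j ∈ Finset.range k, (-1:ℤ)^(j+1+1) * g (j+1+1) = (-1:ℤ)^j * g (j+2) := by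
        intro j _
        have : j + 1 + 1 = j + 2 := by ring
        rw [this]; ring
      rw [Finset.sum_congr rfl e]
      simp only [pow_succ, pow_zero] at *
      have := h1 0
      linarith [h0 0, h0 1]

lemma bAux_tail (d : List ℕ)
    (hsum : ∑ i ∈ Finset.range d.length, (-1:ℤ)^(i+1) * (d.getD i 0 : ℤ) = 0)
    (n : ℕ) (hn : n < d.length) :
    bAux d n = ∑ j ∈ Finset.range (d.length - (n+1)), (-1:ℤ)^j * (d.getD (n+1+j) 0 : ℤ) := by
  have hz : ∑ i ∈ Finset.range d.length, (-1:ℤ)^i * (d.getD i 0 : ℤ) = 0 := by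
    have h1 : ∑ i ∈ Finset.range d.length, (-1:ℤ)^(i+1) * (d.getD i 0 : ℤ)
        = -∑ i ∈ Finset.range d.length, (-1:ℤ)^i * (d.getD i 0 : ℤ) := by
      rw [← Finset.sum_neg_distrib]
      exact Finset.sum_congr rfl (fun i _ => by ring)
    rw [h1] at hsum
    linarith
  have hl : d.length = (n+1) + (d.length - (n+1)) := by omega
  rw [hl, Finset.sum_range_add] at hz
  rw [← bAux_prefix d n] at hz
  have hsq : ((-1:ℤ)^n)^2 = 1 := by
    rw [← pow_mul]
    exact Even.neg_one_pow ⟨n, by ring⟩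
  have h2 : bAux d n = (-1:ℤ)^n * ((-1:ℤ)^n * bAux d n) := by
    rw [← mul_assoc, ← sq, hsq, one_mul]
  have h3 : (-1:ℤ)^n * bAux d n
      = -∑ j ∈ Finset.range (d.length - (n+1)), (-1:ℤ)^(n+1+j) * (d.getD (n+1+j) 0 : ℤ) := by
    linarith
  rw [h2, h3, ← Finset.sum_neg_distrib, Finset.mul_sum]
  apply Finset.sum_congr rfl
  intro j _
  linear_combination ((-1:ℤ)^j * (d.getD (n+1+j) 0 : ℤ)) * hsq

lemma bAux_of_lt (a b : ℕ) (d : List ℕ) (hv : ∀ i < b, d.getD i 0 = a + i + 1) :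
    ∀ n, n < b → bAux d n = if n % 2 = 0 then (a : ℤ) + (n/2 : ℕ) + 1 else ((n/2 : ℕ) : ℤ) + 1
  | 0, h => by
      rw [show bAux d 0 = (d.getD 0 0 : ℤ) from rfl, hv 0 h]
      norm_num
  | n+1, h => by
      have ih := bAux_of_lt a b d hv n (by omega)
      show (d.getD (n+1) 0 : ℤ) - bAux d n = _
      rw [hv (n+1) h, ih]
      split_ifs <;> push_cast <;> omega

/-- for an (a,b)-sequence `d`, the `b_i`'s defined by `b₁ = d₁`,
`b_i = d_i − b_{i−1}` are all nonnegative, the last one vanishes, and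
`∑ d_i = 2 ∑ b_i`; in particular `|Δ|` is even. -/
theorem absSeq_b_properties (a b : ℕ) (hb : 1 ≤ b) (d : List ℕ) (hd : IsABSeq a b d) :
    (∀ i < d.length, 0 ≤ bAux d i) ∧
    bAux d (d.length - 1) = 0 ∧
    ((d.sum : ℤ) = 2 * ∑ i ∈ Finset.range d.length, bAux d i) ∧
    Even d.sum := by
  obtain ⟨hb1, hbl, hpos, hval, hmono, hsum⟩ := hd
  have hl1 : 1 ≤ d.length := le_trans hb1 hbl
  have tail := bAux_tail d hsum
  have hzero : ∀ i, d.length ≤ i → d.getD i 0 = 0 := by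
    intro i hi
    exact List.getD_eq_default d 0 hi
  have hnonneg : ∀ n < d.length, 0 ≤ bAux d n := by
    intro n hn
    by_cases hcase : n < b
    · rw [bAux_of_lt a b d hval n hcase]
      split <;> positivity
    · rw [tail n hn]
      apply alt_nonneg
      · intro j; positivity
      · intro j
        have he : n + 1 + (j + 1) = (n + 1 + j) + 1 := by ring
        rw [he]
        by_cases hj : (n + 1 + j) + 1 < d.length
        · exact_mod_cast hmono (n+1+j) (n+1+j+1) (by omega) (by omega) hj
        · rw [hzero _ (by omega)]
          positivity
  have hlast : bAux d (d.length - 1) = 0 := by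
    rw [tail (d.length - 1) (by omega)]
    have : d.length - ((d.length - 1) + 1) = 0 := by omega
    rw [this]
    simp
  have hds : (d.sum : ℤ) = ∑ n ∈ Finset.range d.length, (d.getD n 0 : ℤ) := by
    rw [listSum_eq]
    push_cast
    rfl
  obtain ⟨k, hk⟩ : ∃ k, d.length = k + 1 := ⟨d.length - 1, by omega⟩
  have hsum2 : (d.sum : ℤ) = 2 * ∑ i ∈ Finset.range d.length, bAux d i := by
    rw [hds, hk, Finset.sum_range_succ']
    have e : ∀ n ∈ Finset.range k, (d.getD (n+1) 0 : ℤ) = bAux d (n+1) + bAux d n := by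
      intro n _
      show _ = (d.getD (n+1) 0 : ℤ) - bAux d n + bAux d n
      ring
    rw [Finset.sum_congr rfl e, Finset.sum_add_distrib]
    have e1 : ∑ i ∈ Finset.range (k+1), bAux d i
        = ∑ i ∈ Finset.range k, bAux d (i+1) + bAux d 0 := Finset.sum_range_succ' _ _
    have e2 : ∑ i ∈ Finset.range (k+1), bAux d i
        = ∑ i ∈ Finset.range k, bAux d i + bAux d k := Finset.sum_range_succ _ _
    have e3 : bAux d k = 0 := by
      have : d.length - 1 = k := by omega
      rwa [this] at hlast
    have e4 : (d.getD 0 0 : ℤ) = bAux d 0 := rfl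
    rw [e4]
    rw [e3] at e2
    linarith
  refine ⟨hnonneg, hlast, hsum2, ?_⟩
  have hnn : 0 ≤ ∑ i ∈ Finset.range d.length, bAux d i :=
    Finset.sum_nonneg (fun i hi => hnonneg i (Finset.mem_range.mp hi))
  have : Even ((d.sum : ℤ)) := ⟨∑ i ∈ Finset.range d.length, bAux d i, by linarith⟩
  exact_mod_cast this
end

section
/- For fixed a ≥ 0 and b ≥ 1, there is a bijection φ_a between the set S_{a,b} of (a,b)-sequences and the set P_{a,b} of partitions λ whose a-Durfee rectangle has size ⌈b/2⌉ × (⌈b/2⌉ + a) and which satisfy λ_{b/2} > a + b/2 if b is even, or λ_{(b+1)/2} = a + (b+1)/2 if b is odd; moreover |Δ| = 2|φ_a(Δ)| for all Δ ∈ S_{a,b}. -/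
open Finset PowerSeries

/-- The size of the `a`-Durfee rectangle of a partition: the largest `i` such that an
`i × (i + a)` rectangle fits inside the Young diagram. -/
def durfee (a : ℕ) (L : List ℕ) : ℕ :=
  Nat.findGreatest (fun i => i ≤ L.length ∧ i + a ≤ L.getD (i - 1) 0) L.length

/-- Membership in `P_{a,b}`: the `a`-Durfee rectangle has `⌈b/2⌉` rows, and
`λ_{b/2} > a + b/2` if `b` is even, `λ_{(b+1)/2} = a + (b+1)/2` if `b` is odd. -/
def InPab (a b : ℕ) (L : List ℕ) : Prop :=
  IsPartitionList L ∧ durfee a L = (b + 1) / 2 ∧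
  (if b % 2 = 0 then a + b / 2 < L.getD (b / 2 - 1) 0
   else L.getD ((b + 1) / 2 - 1) 0 = a + (b + 1) / 2)

/-!
Write an `(a,b)`-sequence as the staircase `a+1, …, a+b` followed by a partition `e` with parts
at most `a+b`; the vanishing of the alternating sum prescribes the alternating sum of `e`. The
conjugate `f` of `e` has at most `a+b` parts, and its number of odd parts is that alternating sum.
Halving the odd parts and the even parts of `f` gives a pair `(h, g)` with
`|f| = 2(|h| + |g|) + #(odd parts)`. For `b = 2m` the partition `λ` consists of the `m` rows
`h_i + a + m + 1` followed by the conjugate of `g`; for `b = 2m + 1` it consists of the rows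
`g_i + a + m + 1`, padded with rows `a + m + 1` to `m + 1` rows, followed by the conjugate of `h`.
Every step is invertible, and the sizes add up to `|Δ| = 2|λ|`.
-/

open Set

namespace FuTang

section Sorting

lemma map_map_eq_self {α β : Type*} {l : List α} {f : α → β} {g : β → α}
    (h : ∀ x ∈ l, g (f x) = x) : (l.map f).map g = l := by
  rw [List.map_map]
  conv_rhs => rw [← List.map_id l]
  exact List.map_congr_left h

variable {α : Type*} [LinearOrder α] {l : List α}

lemma filter_insertionSort (p : α → Bool) (hl : (l.filter p).Pairwise (· ≥ ·)) :
    (l.insertionSort (· ≥ ·)).filter p = l.filter p :=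
  ((List.perm_insertionSort _ l).filter p).eq_of_pairwise'
    ((List.pairwise_insertionSort _ l).filter p) hl

lemma insertionSort_eq_of_perm {l' : List α} (h : l.Perm l') (hl' : l'.Pairwise (· ≥ ·)) :
    l.insertionSort (· ≥ ·) = l' :=
  ((List.perm_insertionSort _ l).trans h).eq_of_pairwise' (List.pairwise_insertionSort _ l) hl'

end Sorting

section ListLemmas

variable {L : List ℕ}

lemma getD_le_getD_of_le (hL : L.Pairwise (· ≥ ·)) {i j : ℕ} (hij : i ≤ j) :
    L.getD j 0 ≤ L.getD i 0 := by
  rcases lt_or_ge j L.length with hj | hj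
  · rcases hij.eq_or_lt with rfl | hlt
    · exact le_rfl
    · rw [List.getD_eq_getElem _ _ hj, List.getD_eq_getElem _ _ (hlt.trans hj)]
      exact List.pairwise_iff_getElem.mp hL i j _ _ hlt
  · rw [List.getD_eq_default _ _ hj]
    exact Nat.zero_le _

lemma getD_le_of_forall_le {c : ℕ} (h : ∀ x ∈ L, x ≤ c) (i : ℕ) : L.getD i 0 ≤ c := by
  rcases lt_or_ge i L.length with hi | hi
  · exact h _ (List.getD_eq_getElem _ _ hi ▸ List.getElem_mem hi)
  · rw [List.getD_eq_default _ _ hi]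
    exact Nat.zero_le _

lemma lt_length_of_pos_getD {i : ℕ} (h : 0 < L.getD i 0) : i < L.length := by
  by_contra! hi
  rw [List.getD_eq_default _ _ hi] at h
  exact h.false

lemma getD_mem {i : ℕ} (hi : i < L.length) : L.getD i 0 ∈ L :=
  List.getD_eq_getElem _ _ hi ▸ List.getElem_mem hi

lemma getD_drop (k i : ℕ) : (L.drop k).getD i 0 = L.getD (k + i) 0 := by simp

lemma ext_getD {L' : List ℕ} (hlen : L.length = L'.length)
    (h : ∀ n < L.length, L.getD n 0 = L'.getD n 0) : L = L' :=
  List.ext_getElem hlen fun n h₁ h₂ => by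
    simpa only [List.getD_eq_getElem _ _ h₁, List.getD_eq_getElem _ _ h₂] using h n h₁

lemma pairwise_iff_getD : L.Pairwise (· ≥ ·) ↔
    ∀ i j, i ≤ j → j < L.length → L.getD j 0 ≤ L.getD i 0 :=
  ⟨fun h _ _ hij _ => getD_le_getD_of_le h hij,
    fun h => List.pairwise_iff_getElem.mpr fun i j hi hj hij => by
      simpa only [List.getD_eq_getElem _ _ hi, List.getD_eq_getElem _ _ hj] using h i j hij.le hj⟩

lemma pairwise_drop_iff (k : ℕ) : (L.drop k).Pairwise (· ≥ ·) ↔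
    ∀ i j, k ≤ i → i ≤ j → j < L.length → L.getD j 0 ≤ L.getD i 0 := by
  simp only [pairwise_iff_getD, getD_drop, List.length_drop]
  constructor
  · intro h i j hki hij hj
    simpa only [Nat.add_sub_cancel' hki, Nat.add_sub_cancel' (hki.trans hij)] using
      h (i - k) (j - k) (by omega) (by omega)
  · exact fun h i j hij hj => h (k + i) (k + j) (by omega) (by omega) (by omega)

lemma forall_mem_le_iff (hL : L.Pairwise (· ≥ ·)) {c : ℕ} :
    (∀ x ∈ L, x ≤ c) ↔ L.getD 0 0 ≤ c := by
  refine ⟨fun h => getD_le_of_forall_le h 0, fun h x hx => ?_⟩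
  obtain ⟨i, hi, rfl⟩ := List.mem_iff_getElem.mp hx
  rw [← List.getD_eq_getElem _ 0]
  exact (getD_le_getD_of_le hL (Nat.zero_le i)).trans h

lemma getD_le_of_mem_take (hL : L.Pairwise (· ≥ ·)) {i x : ℕ} (hx : x ∈ L.take (i + 1)) :
    L.getD i 0 ≤ x := by
  obtain ⟨j, hj, rfl⟩ := List.mem_iff_getElem.mp hx
  simp only [List.length_take] at hj
  rw [List.getElem_take, ← List.getD_eq_getElem _ 0]
  exact getD_le_getD_of_le hL (by omega)

lemma sum_eq_sum_range_getD (L : List ℕ) :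
    L.sum = ∑ i ∈ Finset.range L.length, L.getD i 0 := by
  induction L with
  | nil => simp
  | cons x xs ih => simp [Finset.sum_range_succ', ih, add_comm]

lemma filter_lt_append_replicate (hL : L.Pairwise (· ≥ ·)) {c : ℕ}
    (hc : ∀ x ∈ L, c ≤ x) :
    L.filter (c < ·) ++ List.replicate (L.length - (L.filter (c < ·)).length) c = L := by
  induction L with
  | nil => simp
  | cons x xs ih =>
    obtain ⟨hx, hxs⟩ := List.pairwise_cons.mp hL
    rcases (hc x List.mem_cons_self).lt_or_eq with hlt | rfl
    · have := ih hxs fun y hy => hc y (List.mem_cons_of_mem x hy)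
      simp only [List.filter_cons, hlt, decide_true, if_true, List.length_cons, List.cons_append]
      rw [Nat.add_sub_add_right, this]
    · have hxs' : ∀ y ∈ xs, y = c := fun y hy =>
        le_antisymm (hx y hy) (hc y (List.mem_cons_of_mem _ hy))
      have hnil : (c :: xs).filter (c < ·) = [] :=
        List.filter_eq_nil_iff.mpr fun y hy => by
          rcases List.mem_cons.mp hy with rfl | hy
          · simp
          · simp [hxs' y hy]
      rw [hnil, List.nil_append, List.length_nil, Nat.sub_zero, eq_comm, List.eq_replicate_iff]
      exact ⟨rfl, fun y hy => (List.mem_cons.mp hy).elim id (hxs' y)⟩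

lemma isPartitionList_append {L' : List ℕ} (hL : IsPartitionList L) (hL' : IsPartitionList L')
    (h : ∀ x ∈ L, ∀ y ∈ L', y ≤ x) : IsPartitionList (L ++ L') :=
  ⟨List.pairwise_append.mpr ⟨hL.1, hL'.1, h⟩, List.forall_mem_append.mpr ⟨hL.2, hL'.2⟩⟩

lemma isPartitionList_drop (hL : IsPartitionList L) (k : ℕ) : IsPartitionList (L.drop k) :=
  ⟨hL.1.sublist (List.drop_sublist _ _), fun x hx => hL.2 x (List.mem_of_mem_drop hx)⟩

end ListLemmas

section Conjugate

def countGe (L : List ℕ) (v : ℕ) : ℕ := L.countP (v ≤ ·)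

def conjugate (L : List ℕ) : List ℕ := (List.range (L.getD 0 0)).map fun j => countGe L (j + 1)

variable {L : List ℕ}

lemma lt_countGe_iff (hL : L.Pairwise (· ≥ ·)) (v i : ℕ) :
    i < countGe L v ↔ i < L.length ∧ v ≤ L.getD i 0 := by
  induction L generalizing i with
  | nil => simp [countGe]
  | cons x xs ih =>
    rcases le_or_gt v x with hvx | hxv
    · cases i with
      | zero => simp [countGe, hvx]
      | succ i =>
        have := ih (List.pairwise_cons.mp hL).2 i
        simp only [countGe] at this
        simp [countGe, hvx, this]
    · have hzero : countGe (x :: xs) v = 0 := List.countP_eq_zero.mpr fun y hy => by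
        have : y ≤ x := (List.mem_cons.mp hy).elim le_of_eq ((List.pairwise_cons.mp hL).1 y)
        simp only [decide_eq_true_eq]
        omega
      have := getD_le_getD_of_le hL (Nat.zero_le i)
      rw [List.getD_cons_zero] at this
      rw [hzero]
      omega

lemma countGe_le_length (v : ℕ) : countGe L v ≤ L.length := List.countP_le_length

lemma length_conjugate : (conjugate L).length = L.getD 0 0 := by simp [conjugate]

lemma getD_conjugate (hL : L.Pairwise (· ≥ ·)) (j : ℕ) :
    (conjugate L).getD j 0 = countGe L (j + 1) := by
  rcases lt_or_ge j (L.getD 0 0) with hj | hj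
  · rw [conjugate, List.getD_eq_getElem _ _ (by simpa using hj)]
    simp
  · rw [List.getD_eq_default _ _ (length_conjugate (L := L) ▸ hj), eq_comm, ← Nat.le_zero]
    by_contra! hpos
    have := ((lt_countGe_iff hL _ 0).mp hpos).2
    omega

lemma pairwise_conjugate (L : List ℕ) : (conjugate L).Pairwise (· ≥ ·) :=
  List.pairwise_lt_range.map _ fun _ _ h => List.countP_mono_left fun _ _ hx => by
    simp only [decide_eq_true_eq] at hx ⊢
    omega

lemma isPartitionList_conjugate (hL : L.Pairwise (· ≥ ·)) : IsPartitionList (conjugate L) := by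
  refine ⟨pairwise_conjugate L, ?_⟩
  simp only [conjugate, List.mem_map, List.mem_range, forall_exists_index, and_imp]
  rintro _ j hj rfl
  exact (lt_countGe_iff hL _ 0).mpr ⟨lt_length_of_pos_getD (by omega), hj⟩

lemma le_length_of_mem_conjugate : ∀ x ∈ conjugate L, x ≤ L.length := by
  simp only [conjugate, List.mem_map, forall_exists_index, and_imp]
  rintro _ j _ rfl
  exact countGe_le_length _

lemma length_conjugate_le {c : ℕ} (h : ∀ x ∈ L, x ≤ c) : (conjugate L).length ≤ c :=
  length_conjugate (L := L) ▸ getD_le_of_forall_le h 0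

lemma countGe_conjugate (hL : L.Pairwise (· ≥ ·)) (i : ℕ) :
    countGe (conjugate L) (i + 1) = L.getD i 0 := by
  refine eq_of_forall_lt_iff fun j => ?_
  rw [lt_countGe_iff (pairwise_conjugate L), length_conjugate, getD_conjugate hL,
    Nat.add_one_le_iff, lt_countGe_iff hL]
  have := getD_le_getD_of_le hL (Nat.zero_le i)
  have : 0 < L.getD i 0 → i < L.length := lt_length_of_pos_getD
  omega

/-- Counting the cells of the Young diagram column by column. -/
lemma sum_getD_smul_eq_sum_countGe (hL : L.Pairwise (· ≥ ·)) {R : Type*} [AddCommMonoid R]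
    (w : ℕ → R) : ∑ i ∈ Finset.range L.length, L.getD i 0 • w i =
      ∑ j ∈ Finset.range (L.getD 0 0), ∑ i ∈ Finset.range (countGe L (j + 1)), w i := by
  calc ∑ i ∈ Finset.range L.length, L.getD i 0 • w i
      = ∑ i ∈ Finset.range L.length, ∑ j ∈ Finset.range (L.getD 0 0),
          if j < L.getD i 0 then w i else 0 := by
        refine Finset.sum_congr rfl fun i _ => ?_
        have hrow : {j ∈ Finset.range (L.getD 0 0) | j < L.getD i 0} =
            Finset.range (L.getD i 0) := by
          ext j
          have := getD_le_getD_of_le hL (Nat.zero_le i)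
          simp only [Finset.mem_filter, Finset.mem_range]
          omega
        rw [← Finset.sum_filter, hrow, Finset.sum_const, Finset.card_range]
    _ = ∑ j ∈ Finset.range (L.getD 0 0), ∑ i ∈ Finset.range L.length,
          if j < L.getD i 0 then w i else 0 := Finset.sum_comm
    _ = _ := by
        refine Finset.sum_congr rfl fun j _ => ?_
        rw [← Finset.sum_filter]
        congr 1
        ext i
        simp only [Finset.mem_filter, Finset.mem_range, lt_countGe_iff hL]
        omega

lemma sum_conjugate (hL : L.Pairwise (· ≥ ·)) : (conjugate L).sum = L.sum := by
  have := sum_getD_smul_eq_sum_countGe hL fun _ => 1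
  simp only [smul_eq_mul, mul_one, Finset.sum_const, Finset.card_range] at this
  rw [sum_eq_sum_range_getD, sum_eq_sum_range_getD, this, length_conjugate]
  exact Finset.sum_congr rfl fun j _ => getD_conjugate hL j

lemma conjugate_conjugate_append_replicate (hL : L.Pairwise (· ≥ ·)) :
    conjugate (conjugate L) ++ List.replicate (L.length - (conjugate (conjugate L)).length) 0
      = L := by
  have hlen : (conjugate (conjugate L)).length = countGe L 1 := by
    rw [length_conjugate, getD_conjugate hL]
  have hle := countGe_le_length (L := L) 1
  refine ext_getD (by simp only [List.length_append, List.length_replicate]; omega) fun n hn => ?_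
  rcases lt_or_ge n (countGe L 1) with hn' | hn'
  · rw [List.getD_append _ _ _ _ (by omega), getD_conjugate (pairwise_conjugate L),
      countGe_conjugate hL]
  · simp only [List.length_append, List.length_replicate] at hn
    have : ¬ (n < L.length ∧ 1 ≤ L.getD n 0) := (lt_countGe_iff hL 1 n).not.mp (by omega)
    rw [List.getD_append_right _ _ _ _ (by omega), List.getD_replicate _ (by omega)]
    omega

lemma conjugate_conjugate (hL : IsPartitionList L) : conjugate (conjugate L) = L := by
  have hlen : (conjugate (conjugate L)).length = L.length := by
    rw [length_conjugate, getD_conjugate hL.1]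
    exact List.countP_eq_length.mpr fun x hx => decide_eq_true (hL.2 x hx)
  simpa [hlen] using conjugate_conjugate_append_replicate hL.1

lemma conjugate_append_replicate_zero (L : List ℕ) (k : ℕ) :
    conjugate (L ++ List.replicate k 0) = conjugate L := by
  have hcount : ∀ j, countGe (L ++ List.replicate k 0) (j + 1) = countGe L (j + 1) := fun j => by
    simp [countGe, List.countP_append, List.countP_replicate]
  have hhead : (L ++ List.replicate k 0).getD 0 0 = L.getD 0 0 := by
    rcases L with _ | ⟨x, xs⟩
    · cases k <;> simp
    · simp
  simp only [conjugate, hhead, hcount]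

end Conjugate

section AlternatingSum

def oddParts (f : List ℕ) : List ℕ := f.filter (· % 2 = 1)

def evenParts (f : List ℕ) : List ℕ := f.filter (· % 2 = 0)

def altSum (L : List ℕ) : ℤ := ∑ i ∈ Finset.range L.length, (-1) ^ i * (L.getD i 0 : ℤ)

@[simp] lemma mem_oddParts {f : List ℕ} {x : ℕ} :
    x ∈ oddParts f ↔ x ∈ f ∧ x % 2 = 1 := by
  simp [oddParts]

@[simp] lemma mem_evenParts {f : List ℕ} {x : ℕ} :
    x ∈ evenParts f ↔ x ∈ f ∧ x % 2 = 0 := by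
  simp [evenParts]

lemma sum_range_neg_one_pow (n : ℕ) :
    ∑ i ∈ Finset.range n, (-1 : ℤ) ^ i = (n % 2 : ℕ) := by
  induction n with
  | zero => simp
  | succ n ih =>
    rw [Finset.sum_range_succ, ih]
    rcases Nat.even_or_odd n with h | h
    · rw [h.neg_one_pow, Nat.even_iff.mp h, Nat.succ_mod_two_eq_one_iff.mpr (Nat.even_iff.mp h)]
      norm_num
    · rw [h.neg_one_pow, Nat.odd_iff.mp h, Nat.succ_mod_two_eq_zero_iff.mpr (Nat.odd_iff.mp h)]
      norm_num

lemma length_oddParts_map_range (n : ℕ) (g : ℕ → ℕ) :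
    (oddParts ((List.range n).map g)).length = ∑ j ∈ Finset.range n, g j % 2 := by
  induction n with
  | zero => simp [oddParts]
  | succ n ih =>
    rw [List.range_succ, List.map_append, oddParts, List.filter_append, List.length_append,
      ← oddParts, ih, Finset.sum_range_succ]
    rcases Nat.mod_two_eq_zero_or_one (g n) with h | h <;> simp [h]

lemma altSum_append (L L' : List ℕ) :
    altSum (L ++ L') = altSum L + (-1) ^ L.length * altSum L' := by
  rw [altSum, altSum, altSum, List.length_append, Finset.sum_range_add, Finset.mul_sum]
  congr 1
  · exact Finset.sum_congr rfl fun i hi => by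
      rw [List.getD_append _ _ _ _ (Finset.mem_range.mp hi)]
  · refine Finset.sum_congr rfl fun j _ => ?_
    rw [List.getD_append_right _ _ _ _ (Nat.le_add_right _ _), Nat.add_sub_cancel_left, pow_add]
    ring

/-- Summing `(-1) ^ i` down the `j`-th column gives `1` exactly when that column has odd length. -/
lemma altSum_eq_length_oddParts_conjugate {L : List ℕ} (hL : L.Pairwise (· ≥ ·)) :
    altSum L = (oddParts (conjugate L)).length := by
  have := sum_getD_smul_eq_sum_countGe hL fun i => (-1 : ℤ) ^ i
  simp only [nsmul_eq_mul, sum_range_neg_one_pow] at this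
  rw [altSum, conjugate, length_oddParts_map_range, Nat.cast_sum]
  simpa only [mul_comm] using this

lemma bijOn_conjugate (N c : ℕ) :
    BijOn conjugate {e | IsPartitionList e ∧ (∀ x ∈ e, x ≤ N) ∧ altSum e = c}
      {f | IsPartitionList f ∧ f.length ≤ N ∧ (oddParts f).length = c} := by
  refine InvOn.bijOn
    ⟨fun e he => conjugate_conjugate he.1, fun f hf => conjugate_conjugate hf.1⟩ ?_ ?_
  · rintro e ⟨he, hle, halt⟩
    refine ⟨isPartitionList_conjugate he.1, length_conjugate_le hle, ?_⟩
    rwa [altSum_eq_length_oddParts_conjugate he.1, Nat.cast_inj] at halt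
  · rintro f ⟨hf, hlen, hodd⟩
    refine ⟨isPartitionList_conjugate hf.1,
      fun x hx => (le_length_of_mem_conjugate x hx).trans hlen, ?_⟩
    rw [altSum_eq_length_oddParts_conjugate (pairwise_conjugate f), conjugate_conjugate hf, hodd]

end AlternatingSum

section Halves

def halves (f : List ℕ) : List ℕ × List ℕ :=
  ((oddParts f).map (· / 2), (evenParts f).map (· / 2))

def unhalve (p : List ℕ × List ℕ) : List ℕ :=
  (p.1.map (2 * · + 1) ++ p.2.map (2 * ·)).insertionSort (· ≥ ·)

def halfPairs (N c : ℕ) : Set (List ℕ × List ℕ) :=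
  {p | p.1.Pairwise (· ≥ ·) ∧ p.1.length = c ∧ IsPartitionList p.2 ∧ c + p.2.length ≤ N}

variable {f : List ℕ} {p : List ℕ × List ℕ}

lemma pairwise_map_div_two {L : List ℕ} (hL : L.Pairwise (· ≥ ·)) :
    (L.map (· / 2)).Pairwise (· ≥ ·) :=
  hL.map _ fun _ _ h => Nat.div_le_div_right h

lemma oddParts_append_evenParts_perm (f : List ℕ) : (oddParts f ++ evenParts f).Perm f := by
  have : evenParts f = f.filter fun x => !decide (x % 2 = 1) :=
    List.filter_congr fun x _ => by rcases Nat.mod_two_eq_zero_or_one x with h | h <;> simp [h]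
  rw [this]
  exact List.filter_append_perm _ f

lemma sum_eq_of_forall_mod_two_eq {L : List ℕ} {r : ℕ} (h : ∀ x ∈ L, x % 2 = r) :
    L.sum = 2 * (L.map (· / 2)).sum + r * L.length := by
  induction L with
  | nil => simp
  | cons x xs ih =>
    have hx := h x List.mem_cons_self
    simp only [List.sum_cons, List.map_cons, List.length_cons, Nat.mul_succ,
      ih fun y hy => h y (List.mem_cons_of_mem x hy)]
    omega

lemma sum_eq_two_mul_sum_halves (f : List ℕ) :
    f.sum = 2 * ((halves f).1.sum + (halves f).2.sum) + (oddParts f).length := by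
  have hodd := sum_eq_of_forall_mod_two_eq (L := oddParts f) (r := 1) fun x hx =>
    (mem_oddParts.mp hx).2
  have heven := sum_eq_of_forall_mod_two_eq (L := evenParts f) (r := 0) fun x hx =>
    (mem_evenParts.mp hx).2
  rw [← (oddParts_append_evenParts_perm f).sum_eq, List.sum_append, hodd, heven, halves]
  ring

lemma oddParts_append {o e : List ℕ} (ho : ∀ x ∈ o, x % 2 = 1)
    (he : ∀ x ∈ e, x % 2 = 0) :
    oddParts (o ++ e) = o := by
  rw [oddParts, List.filter_append, List.filter_eq_self.mpr fun x hx => by simp [ho x hx],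
    List.filter_eq_nil_iff.mpr fun x hx => by simp [he x hx], List.append_nil]

lemma evenParts_append {o e : List ℕ} (ho : ∀ x ∈ o, x % 2 = 1)
    (he : ∀ x ∈ e, x % 2 = 0) :
    evenParts (o ++ e) = e := by
  rw [evenParts, List.filter_append, List.filter_eq_nil_iff.mpr fun x hx => by simp [ho x hx],
    List.filter_eq_self.mpr fun x hx => by simp [he x hx], List.nil_append]

lemma oddParts_unhalve (hp : p.1.Pairwise (· ≥ ·)) :
    oddParts (unhalve p) = p.1.map (2 * · + 1) := by
  have hsplit := oddParts_append (o := p.1.map (2 * · + 1)) (e := p.2.map (2 * ·)) (by simp)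
    (by simp)
  have hsorted : (oddParts (p.1.map (2 * · + 1) ++ p.2.map (2 * ·))).Pairwise (· ≥ ·) :=
    by rw [hsplit]; exact hp.map _ fun _ _ h => by omega
  rw [oddParts, unhalve, filter_insertionSort _ hsorted, ← oddParts, hsplit]

lemma evenParts_unhalve (hp : p.2.Pairwise (· ≥ ·)) :
    evenParts (unhalve p) = p.2.map (2 * ·) := by
  have hsplit := evenParts_append (o := p.1.map (2 * · + 1)) (e := p.2.map (2 * ·)) (by simp)
    (by simp)
  have hsorted : (evenParts (p.1.map (2 * · + 1) ++ p.2.map (2 * ·))).Pairwise (· ≥ ·) :=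
    by rw [hsplit]; exact hp.map _ fun _ _ h => by omega
  rw [evenParts, unhalve, filter_insertionSort _ hsorted, ← evenParts, hsplit]

lemma halves_unhalve (h₁ : p.1.Pairwise (· ≥ ·)) (h₂ : p.2.Pairwise (· ≥ ·)) :
    halves (unhalve p) = p := by
  rw [halves, oddParts_unhalve h₁, evenParts_unhalve h₂, map_map_eq_self fun _ _ => by omega,
    map_map_eq_self fun _ _ => by omega]

lemma unhalve_halves (hf : f.Pairwise (· ≥ ·)) : unhalve (halves f) = f := by
  refine insertionSort_eq_of_perm ?_ hf
  rw [halves, map_map_eq_self, map_map_eq_self]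
  · exact oddParts_append_evenParts_perm f
  · intro x hx
    have := (mem_evenParts.mp hx).2
    omega
  · intro x hx
    have := (mem_oddParts.mp hx).2
    omega

lemma halves_mem_halfPairs {N c : ℕ} (hf : IsPartitionList f) (hlen : f.length ≤ N)
    (hodd : (oddParts f).length = c) : halves f ∈ halfPairs N c := by
  have hperm := (oddParts_append_evenParts_perm f).length_eq
  refine ⟨pairwise_map_div_two (hf.1.filter _), by simp [halves, hodd],
    ⟨pairwise_map_div_two (hf.1.filter _), ?_⟩, ?_⟩
  · simp only [halves, List.mem_map, mem_evenParts, forall_exists_index, and_imp]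
    rintro _ x hx hx2 rfl
    have := hf.2 x hx
    omega
  · simp only [halves, List.length_map, List.length_append] at hperm ⊢
    omega

lemma mapsTo_unhalve (N c : ℕ) : MapsTo unhalve (halfPairs N c)
    {f | IsPartitionList f ∧ f.length ≤ N ∧ (oddParts f).length = c} := by
  rintro p ⟨h₁, hlen, h₂, hN⟩
  have hperm := List.perm_insertionSort (· ≥ ·) (p.1.map (2 * · + 1) ++ p.2.map (2 * ·))
  refine ⟨⟨List.pairwise_insertionSort _ _, fun x hx => ?_⟩, ?_, ?_⟩
  · rcases List.mem_append.mp (hperm.subset hx) with hx | hx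
    · obtain ⟨y, -, rfl⟩ := List.mem_map.mp hx
      omega
    · obtain ⟨y, hy, rfl⟩ := List.mem_map.mp hx
      have := h₂.2 y hy
      omega
  · simp only [unhalve, hperm.length_eq, List.length_append, List.length_map]
    omega
  · rw [oddParts_unhalve h₁, List.length_map, hlen]

lemma bijOn_halves (N c : ℕ) :
    BijOn halves {f | IsPartitionList f ∧ f.length ≤ N ∧ (oddParts f).length = c}
      (halfPairs N c) :=
  InvOn.bijOn ⟨fun _ hf => unhalve_halves hf.1.1, fun _ hp => halves_unhalve hp.1 hp.2.2.1.1⟩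
    (fun _ hf => halves_mem_halfPairs hf.1 hf.2.1 hf.2.2) (mapsTo_unhalve N c)

end Halves

section Staircase

def staircase (a b : ℕ) : List ℕ := (List.range b).map (a + · + 1)

/-- The alternating sum forced on the tail `d_{b+1}, d_{b+2}, …` of an `(a,b)`-sequence by the
vanishing of its total alternating sum. -/
def tailAltSum (a b : ℕ) : ℕ := if Even b then b / 2 else a + (b + 1) / 2

variable {a b : ℕ}

@[simp] lemma length_staircase : (staircase a b).length = b := by simp [staircase]

lemma staircase_succ : staircase a (b + 1) = staircase a b ++ [a + b + 1] := by
  simp [staircase, List.range_succ]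

lemma getD_staircase {i : ℕ} (hi : i < b) : (staircase a b).getD i 0 = a + i + 1 := by
  rw [staircase, List.getD_eq_getElem _ _ (by simpa using hi)]
  simp

lemma two_mul_sum_staircase : 2 * (staircase a b).sum = b * (2 * a + b + 1) := by
  induction b with
  | zero => simp [staircase]
  | succ b ih =>
    rw [staircase_succ, List.sum_append, mul_add, ih, List.sum_singleton]
    ring

lemma tailAltSum_succ : (tailAltSum a (b + 1) : ℤ) = a + b + 1 - tailAltSum a b := by
  simp only [tailAltSum, Nat.even_iff]
  split_ifs <;> omega

lemma altSum_staircase :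
    altSum (staircase a b) = (-1) ^ (b + 1) * (tailAltSum a b : ℤ) := by
  induction b with
  | zero => simp [altSum, staircase, tailAltSum]
  | succ b ih =>
    have hlast : altSum [a + b + 1] = a + b + 1 := by simp [altSum]
    rw [staircase_succ, altSum_append, ih, tailAltSum_succ, length_staircase, hlast]
    ring

lemma eq_staircase_append_drop {d : List ℕ} (hd : IsABSeq a b d) :
    d = staircase a b ++ d.drop b := by
  obtain ⟨-, hlen, -, hhead, -⟩ := hd
  conv_lhs => rw [← List.take_append_drop b d]
  congr 1
  refine ext_getD (by simp [hlen]) fun n hn => ?_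
  have hnb : n < b := hn.trans_le (List.length_take_le _ _)
  rw [List.getD_eq_getElem _ _ hn, List.getElem_take, ← List.getD_eq_getElem _ 0, hhead n hnb,
    getD_staircase hnb]

lemma altSum_staircase_append_eq_zero_iff {e : List ℕ} :
    altSum (staircase a b ++ e) = 0 ↔ altSum e = tailAltSum a b := by
  rw [altSum_append, altSum_staircase, length_staircase,
    show (-1) ^ (b + 1) * (tailAltSum a b : ℤ) + (-1) ^ b * altSum e =
      (-1) ^ b * (altSum e - tailAltSum a b) by ring, mul_eq_zero, sub_eq_zero,
    or_iff_right (pow_ne_zero _ (by norm_num))]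

lemma isABSeq_staircase_append_iff (hb : 1 ≤ b) {e : List ℕ} :
    IsABSeq a b (staircase a b ++ e) ↔
      IsPartitionList e ∧ (∀ x ∈ e, x ≤ a + b) ∧ altSum e = tailAltSum a b := by
  have hdrop : (staircase a b ++ e).drop (b - 1) = (a + b) :: e := by
    obtain ⟨k, rfl⟩ : ∃ k, b = k + 1 := ⟨b - 1, by omega⟩
    rw [staircase_succ, List.append_assoc, List.drop_left' (by simp)]
    simp [Nat.add_assoc]
  have hpos : ∀ x ∈ staircase a b, 0 < x := by simp [staircase]
  have hhead : ∀ i < b, (staircase a b ++ e).getD i 0 = a + i + 1 := fun i hi => by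
    rw [List.getD_append _ _ _ _ (by simpa using hi), getD_staircase hi]
  have hsum : ∑ i ∈ Finset.range (staircase a b ++ e).length,
      (-1 : ℤ) ^ (i + 1) * ((staircase a b ++ e).getD i 0 : ℤ) =
        -altSum (staircase a b ++ e) := by
    rw [altSum, ← Finset.sum_neg_distrib]
    exact Finset.sum_congr rfl fun i _ => by ring
  rw [IsABSeq, hsum, neg_eq_zero, altSum_staircase_append_eq_zero_iff, ← pairwise_drop_iff, hdrop,
    List.pairwise_cons, List.forall_mem_append]
  exact ⟨fun ⟨_, _, ⟨_, hp⟩, _, ⟨hle, hs⟩, h⟩ => ⟨⟨hs, hp⟩, hle, h⟩,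
    fun ⟨⟨hs, hp⟩, hle, h⟩ => ⟨hb, by simp, ⟨hpos, hp⟩, hhead, ⟨hle, hs⟩, h⟩⟩

lemma bijOn_drop_staircase (a : ℕ) (hb : 1 ≤ b) :
    BijOn (List.drop b) {d | IsABSeq a b d}
      {e | IsPartitionList e ∧ (∀ x ∈ e, x ≤ a + b) ∧ altSum e = tailAltSum a b} := by
  refine InvOn.bijOn (f' := (staircase a b ++ ·))
    ⟨fun d hd => (eq_staircase_append_drop hd).symm,
      fun e _ => List.drop_left' length_staircase⟩
    (fun d hd => ?_) (fun e he => (isABSeq_staircase_append_iff hb).mpr he)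
  rw [mem_ofPred_eq, eq_staircase_append_drop hd] at hd
  exact (isABSeq_staircase_append_iff hb).mp hd

end Staircase

section Durfee

variable {a m : ℕ} {L : List ℕ}

lemma durfee_eq_iff (hL : L.Pairwise (· ≥ ·)) {n : ℕ} (hn : 1 ≤ n) :
    durfee a L = n ↔
      n ≤ L.length ∧ n + a ≤ L.getD (n - 1) 0 ∧ L.getD n 0 < n + 1 + a := by
  rw [durfee, Nat.findGreatest_eq_iff]
  constructor
  · rintro ⟨hle, hP, hgt⟩
    refine ⟨hle, (hP (by omega)).2, ?_⟩
    rcases lt_or_ge n L.length with h | h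
    · have := hgt (Nat.lt_succ_self n) h
      simp only [not_and, not_le] at this
      exact this h
    · rw [List.getD_eq_default _ _ h]
      omega
  · rintro ⟨hle, hPn, hlt⟩
    refine ⟨hle, fun _ => ⟨hle, hPn⟩, fun k hnk hk ⟨_, hPk⟩ => ?_⟩
    have := getD_le_getD_of_le hL (show n ≤ k - 1 by omega)
    omega

lemma inPab_two_mul_iff (hm : 1 ≤ m) : InPab a (2 * m) L ↔
    IsPartitionList L ∧ m ≤ L.length ∧ a + m < L.getD (m - 1) 0 ∧
      ∀ x ∈ L.drop m, x ≤ a + m := by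
  rw [InPab, if_pos (by omega), show (2 * m + 1) / 2 = m by omega, show 2 * m / 2 = m by omega]
  refine and_congr_right fun hL => ?_
  rw [durfee_eq_iff hL.1 hm, forall_mem_le_iff (isPartitionList_drop hL m).1, getD_drop,
    add_zero]
  omega

lemma inPab_two_mul_add_one_iff : InPab a (2 * m + 1) L ↔
    IsPartitionList L ∧ m + 1 ≤ L.length ∧ L.getD m 0 = a + m + 1 := by
  rw [InPab, if_neg (by omega), show (2 * m + 1 + 1) / 2 = m + 1 by omega]
  refine and_congr_right fun hL => ?_
  rw [durfee_eq_iff hL.1 (by omega), Nat.add_sub_cancel]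
  have := getD_le_getD_of_le hL.1 (show m ≤ m + 1 by omega)
  omega

end Durfee

section EvenCase

variable {a m : ℕ} {L : List ℕ} {p : List ℕ × List ℕ}

def assembleEven (a m : ℕ) (p : List ℕ × List ℕ) : List ℕ :=
  p.1.map (· + (a + m + 1)) ++ conjugate p.2

def splitEven (a m : ℕ) (L : List ℕ) : List ℕ × List ℕ :=
  ((L.take m).map (· - (a + m + 1)), conjugate (L.drop m))

lemma splitEven_assembleEven (hp : p ∈ halfPairs (a + 2 * m) m) :
    splitEven a m (assembleEven a m p) = p := by
  obtain ⟨-, hlen, hg, -⟩ := hp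
  have hlen' : (p.1.map (· + (a + m + 1))).length = m := by simp [hlen]
  rw [splitEven, assembleEven, List.take_left' hlen', List.drop_left' hlen',
    map_map_eq_self (by simp), conjugate_conjugate hg]

lemma assembleEven_splitEven (hm : 1 ≤ m) (hL : InPab a (2 * m) L) :
    assembleEven a m (splitEven a m L) = L := by
  obtain ⟨hL, -, hmid, -⟩ := (inPab_two_mul_iff hm).mp hL
  rw [assembleEven, splitEven, map_map_eq_self, conjugate_conjugate (isPartitionList_drop hL m),
    List.take_append_drop]
  intro x hx
  have := getD_le_of_mem_take hL.1 (i := m - 1) (by rwa [Nat.sub_add_cancel hm])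
  omega

lemma inPab_assembleEven (hm : 1 ≤ m) (hp : p ∈ halfPairs (a + 2 * m) m) :
    InPab a (2 * m) (assembleEven a m p) := by
  obtain ⟨h₁, hlen, hg, hN⟩ := hp
  have hlen' : (p.1.map (· + (a + m + 1))).length = m := by simp [hlen]
  have hbig : ∀ x ∈ p.1.map (· + (a + m + 1)), a + m < x := fun x hx => by
    obtain ⟨y, -, rfl⟩ := List.mem_map.mp hx
    omega
  have hsmall : ∀ y ∈ conjugate p.2, y ≤ a + m := fun y hy =>
    (le_length_of_mem_conjugate y hy).trans (by omega)
  have hhead : IsPartitionList (p.1.map (· + (a + m + 1))) :=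
    ⟨h₁.map _ fun _ _ h => by omega, fun x hx => by have := hbig x hx; omega⟩
  rw [inPab_two_mul_iff hm, assembleEven, List.drop_left' hlen',
    List.getD_append _ _ _ _ (by omega)]
  refine ⟨isPartitionList_append hhead (isPartitionList_conjugate hg.1) fun x hx y hy => ?_,
    by simp [hlen'], hbig _ (getD_mem (by omega)), hsmall⟩
  have := hbig x hx
  have := hsmall y hy
  omega

lemma splitEven_mem_halfPairs (hm : 1 ≤ m) (hL : InPab a (2 * m) L) :
    splitEven a m L ∈ halfPairs (a + 2 * m) m := by
  obtain ⟨hL, hlen, -, hsmall⟩ := (inPab_two_mul_iff hm).mp hL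
  have := length_conjugate_le hsmall
  refine ⟨(hL.1.sublist (List.take_sublist _ _)).map _ fun _ _ h => Nat.sub_le_sub_right h _,
    ?_, isPartitionList_conjugate (isPartitionList_drop hL m).1, ?_⟩ <;>
    simp only [splitEven, List.length_map, List.length_take] <;> omega

lemma bijOn_assembleEven (a : ℕ) (hm : 1 ≤ m) :
    BijOn (assembleEven a m) (halfPairs (a + 2 * m) m) {L | InPab a (2 * m) L} :=
  InvOn.bijOn ⟨fun _ hp => splitEven_assembleEven hp, fun _ hL => assembleEven_splitEven hm hL⟩
    (fun _ hp => inPab_assembleEven hm hp) (fun _ hL => splitEven_mem_halfPairs hm hL)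

lemma two_mul_sum_assembleEven (hp : p ∈ halfPairs (a + 2 * m) m) :
    2 * (assembleEven a m p).sum = 2 * (p.1.sum + p.2.sum) + (staircase a (2 * m)).sum + m := by
  obtain ⟨-, hlen, hg, -⟩ := hp
  have := two_mul_sum_staircase (a := a) (b := 2 * m)
  simp only [assembleEven, List.sum_append, sum_conjugate hg.1, List.sum_map_add, List.map_id',
    List.map_const', List.sum_replicate, hlen, smul_eq_mul]
  linarith

end EvenCase

section ShiftPad

def shiftPad (c n : ℕ) (g : List ℕ) : List ℕ :=
  g.map (· + c) ++ List.replicate (n - g.length) c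

variable {c n : ℕ} {g : List ℕ}

lemma length_shiftPad (hg : g.length ≤ n) : (shiftPad c n g).length = n := by
  simp only [shiftPad, List.length_append, List.length_map, List.length_replicate]
  omega

lemma le_of_mem_shiftPad : ∀ x ∈ shiftPad c n g, c ≤ x := by
  simp only [shiftPad, List.mem_append, List.mem_map, List.mem_replicate]
  rintro x (⟨y, -, rfl⟩ | ⟨-, rfl⟩) <;> omega

lemma isPartitionList_shiftPad (hg : IsPartitionList g) (hc : 0 < c) :
    IsPartitionList (shiftPad c n g) := by
  refine isPartitionList_append ⟨hg.1.map _ fun _ _ h => by omega, fun x hx => by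
      obtain ⟨y, -, rfl⟩ := List.mem_map.mp hx
      omega⟩
    ⟨List.pairwise_replicate.mpr (Or.inr le_rfl), fun x hx => ?_⟩ fun x hx y hy => ?_
  · rwa [List.eq_of_mem_replicate hx]
  · obtain ⟨z, -, rfl⟩ := List.mem_map.mp hx
    rw [List.eq_of_mem_replicate hy]
    omega

lemma getD_shiftPad_sub_one (hg : g.length < n) : (shiftPad c n g).getD (n - 1) 0 = c := by
  rw [shiftPad, List.getD_append_right _ _ _ _ (by simp only [List.length_map]; omega),
    List.getD_replicate _ (by simp only [List.length_map]; omega)]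

lemma filter_shiftPad (hg : ∀ x ∈ g, 0 < x) :
    (shiftPad c n g).filter (c < ·) = g.map (· + c) := by
  rw [shiftPad, List.filter_append, List.filter_eq_self.mpr, List.filter_eq_nil_iff.mpr,
    List.append_nil]
  · intro x hx
    simp [List.eq_of_mem_replicate hx]
  · intro x hx
    obtain ⟨y, hy, rfl⟩ := List.mem_map.mp hx
    simpa using hg y hy

lemma shiftPad_map_sub_filter {K : List ℕ} (hK : K.Pairwise (· ≥ ·))
    (hc : ∀ x ∈ K, c ≤ x) :
    shiftPad c K.length ((K.filter (c < ·)).map (· - c)) = K := by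
  rw [shiftPad, List.length_map, map_map_eq_self, filter_lt_append_replicate hK hc]
  intro x hx
  have := (List.mem_filter.mp hx).2
  simp only [decide_eq_true_eq] at this
  omega

lemma sum_shiftPad (hg : g.length ≤ n) : (shiftPad c n g).sum = g.sum + n * c := by
  obtain ⟨k, rfl⟩ := Nat.exists_eq_add_of_le hg
  simp only [shiftPad, List.sum_append, List.sum_map_add, List.map_id', List.map_const',
    List.sum_replicate, Nat.add_sub_cancel_left, smul_eq_mul]
  ring

end ShiftPad

section OddCase

variable {a m : ℕ} {L : List ℕ} {p : List ℕ × List ℕ}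

def assembleOdd (a m : ℕ) (p : List ℕ × List ℕ) : List ℕ :=
  shiftPad (a + m + 1) (m + 1) p.2 ++ conjugate p.1

def splitOdd (a m : ℕ) (L : List ℕ) : List ℕ × List ℕ :=
  (conjugate (L.drop (m + 1)) ++
      List.replicate (a + m + 1 - (conjugate (L.drop (m + 1))).length) 0,
    ((L.take (m + 1)).filter (a + m + 1 < ·)).map (· - (a + m + 1)))

lemma splitOdd_assembleOdd (hp : p ∈ halfPairs (a + (2 * m + 1)) (a + m + 1)) :
    splitOdd a m (assembleOdd a m p) = p := by
  obtain ⟨h₁, hlen, hg, hN⟩ := hp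
  have hW := length_shiftPad (c := a + m + 1) (show p.2.length ≤ m + 1 by omega)
  rw [splitOdd, assembleOdd, List.take_left' hW, List.drop_left' hW, filter_shiftPad hg.2,
    map_map_eq_self (by simp), ← hlen, conjugate_conjugate_append_replicate h₁]

lemma assembleOdd_splitOdd (hL : InPab a (2 * m + 1) L) :
    assembleOdd a m (splitOdd a m L) = L := by
  obtain ⟨hL, hlen, hmid⟩ := inPab_two_mul_add_one_iff.mp hL
  have htake := shiftPad_map_sub_filter (K := L.take (m + 1)) (c := a + m + 1)
    (hL.1.sublist (List.take_sublist _ _)) fun x hx => hmid ▸ getD_le_of_mem_take hL.1 hx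
  rw [List.length_take, min_eq_left hlen] at htake
  rw [assembleOdd, splitOdd, htake, conjugate_append_replicate_zero,
    conjugate_conjugate (isPartitionList_drop hL _), List.take_append_drop]

lemma inPab_assembleOdd (hp : p ∈ halfPairs (a + (2 * m + 1)) (a + m + 1)) :
    InPab a (2 * m + 1) (assembleOdd a m p) := by
  obtain ⟨h₁, hlen, hg, hN⟩ := hp
  have hW := length_shiftPad (c := a + m + 1) (show p.2.length ≤ m + 1 by omega)
  rw [inPab_two_mul_add_one_iff, assembleOdd, List.getD_append _ _ _ _ (by omega)]
  refine ⟨isPartitionList_append (isPartitionList_shiftPad hg (by omega))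
    (isPartitionList_conjugate h₁) fun x hx y hy => ?_, by simp [hW],
    getD_shiftPad_sub_one (by omega)⟩
  have := le_of_mem_shiftPad x hx
  have := le_length_of_mem_conjugate y hy
  omega

lemma splitOdd_mem_halfPairs (hL : InPab a (2 * m + 1) L) :
    splitOdd a m L ∈ halfPairs (a + (2 * m + 1)) (a + m + 1) := by
  obtain ⟨hL, hlen, hmid⟩ := inPab_two_mul_add_one_iff.mp hL
  have hconj : (conjugate (L.drop (m + 1))).length ≤ a + m + 1 := by
    refine length_conjugate_le ((forall_mem_le_iff (isPartitionList_drop hL _).1).mpr ?_)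
    rw [getD_drop, add_zero, ← hmid]
    exact getD_le_getD_of_le hL.1 (by omega)
  have hmem : a + m + 1 ∈ L.take (m + 1) := List.mem_iff_getElem.mpr
    ⟨m, by simp only [List.length_take]; omega,
      by rw [List.getElem_take, ← List.getD_eq_getElem _ 0, hmid]⟩
  have hshort : ((L.take (m + 1)).filter (a + m + 1 < ·)).length < m + 1 := by
    have : ((L.take (m + 1)).filter (a + m + 1 < ·)).length < (L.take (m + 1)).length :=
      List.length_filter_lt_length_iff_exists.mpr ⟨_, hmem, by simp⟩
    rwa [List.length_take, min_eq_left hlen] at this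
  have hsorted : (conjugate (L.drop (m + 1)) ++ List.replicate
      (a + m + 1 - (conjugate (L.drop (m + 1))).length) 0).Pairwise (· ≥ ·) :=
    List.pairwise_append.mpr ⟨pairwise_conjugate _, List.pairwise_replicate.mpr (Or.inr le_rfl),
      fun x _ y hy => List.eq_of_mem_replicate hy ▸ Nat.zero_le x⟩
  have hrows : IsPartitionList
      (((L.take (m + 1)).filter (a + m + 1 < ·)).map (· - (a + m + 1))) := by
    refine ⟨((hL.1.sublist (List.take_sublist _ _)).filter _).map _
      fun _ _ h => Nat.sub_le_sub_right h _, ?_⟩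
    simp only [List.mem_map, List.mem_filter, decide_eq_true_eq, forall_exists_index, and_imp]
    rintro _ y - hy rfl
    omega
  refine ⟨hsorted, ?_, hrows, ?_⟩ <;>
    simp only [splitOdd, List.length_append, List.length_replicate, List.length_map] <;> omega

lemma bijOn_assembleOdd (a m : ℕ) :
    BijOn (assembleOdd a m) (halfPairs (a + (2 * m + 1)) (a + m + 1))
      {L | InPab a (2 * m + 1) L} :=
  InvOn.bijOn ⟨fun _ hp => splitOdd_assembleOdd hp, fun _ hL => assembleOdd_splitOdd hL⟩
    (fun _ hp => inPab_assembleOdd hp) (fun _ hL => splitOdd_mem_halfPairs hL)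

lemma two_mul_sum_assembleOdd (hp : p ∈ halfPairs (a + (2 * m + 1)) (a + m + 1)) :
    2 * (assembleOdd a m p).sum =
      2 * (p.1.sum + p.2.sum) + (staircase a (2 * m + 1)).sum + (a + m + 1) := by
  obtain ⟨h₁, -, -, hN⟩ := hp
  have := two_mul_sum_staircase (a := a) (b := 2 * m + 1)
  rw [assembleOdd, List.sum_append, sum_shiftPad (by omega), sum_conjugate h₁]
  linarith

end OddCase

lemma exists_bijOn_halfPairs_inPab (a : ℕ) {b : ℕ} (hb : 1 ≤ b) :
    ∃ Φ : List ℕ × List ℕ → List ℕ,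
      BijOn Φ (halfPairs (a + b) (tailAltSum a b)) {L | InPab a b L} ∧
      ∀ p ∈ halfPairs (a + b) (tailAltSum a b),
        2 * (Φ p).sum = 2 * (p.1.sum + p.2.sum) + (staircase a b).sum + tailAltSum a b := by
  rcases Nat.even_or_odd' b with ⟨m, rfl | rfl⟩
  · rw [show tailAltSum a (2 * m) = m by simp [tailAltSum]]
    exact ⟨assembleEven a m, bijOn_assembleEven a (by omega),
      fun _ hp => two_mul_sum_assembleEven hp⟩
  · rw [show tailAltSum a (2 * m + 1) = a + m + 1 by
      rw [tailAltSum, if_neg (Nat.not_even_iff_odd.mpr (odd_two_mul_add_one m))]; omega]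
    exact ⟨assembleOdd a m, bijOn_assembleOdd a m, fun _ hp => two_mul_sum_assembleOdd hp⟩

end FuTang

open FuTang in
theorem fu_tang_bijection_general (a b : ℕ) (hb : 1 ≤ b) :
    ∃ φ : {d : List ℕ // IsABSeq a b d} → {L : List ℕ // InPab a b L},
      Function.Bijective φ ∧ ∀ Δ : {d : List ℕ // IsABSeq a b d}, Δ.1.sum = 2 * (φ Δ).1.sum := by
  obtain ⟨Φ, hΦ, hΦsum⟩ := exists_bijOn_halfPairs_inPab a hb
  have htail := bijOn_drop_staircase a hb
  have hconj := bijOn_conjugate (a + b) (tailAltSum a b)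
  have hhalves := bijOn_halves (a + b) (tailAltSum a b)
  have hbij := hΦ.comp (hhalves.comp (hconj.comp htail))
  refine ⟨hbij.mapsTo.restrict _ _ _, hbij.bijective, fun ⟨d, hd⟩ => ?_⟩
  have he := htail.mapsTo hd
  have hf := hconj.mapsTo he
  have hsum_tail := congrArg List.sum (eq_staircase_append_drop hd)
  rw [List.sum_append] at hsum_tail
  have hsum_conj := sum_conjugate he.1.1
  have hsum_halves := sum_eq_two_mul_sum_halves (conjugate (d.drop b))
  have hsum_assemble := hΦsum _ (hhalves.mapsTo hf)
  have hodd := hf.2.2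
  simp only [MapsTo.val_restrict_apply, Function.comp_apply]
  omega

/-- Fu–Tang: there is a bijection `φ_a : S_{a,b} → P_{a,b}` with
`|Δ| = 2 |φ_a(Δ)|`. -/
theorem fu_tang_bijection (a b : ℕ) (ha : 0 ≤ a) (hb : 1 ≤ b) :
    ∃ φ : {d : List ℕ // IsABSeq a b d} → {L : List ℕ // InPab a b L},
      Function.Bijective φ ∧ ∀ Δ : {d : List ℕ // IsABSeq a b d}, Δ.1.sum = 2 * (φ Δ).1.sum :=
  fu_tang_bijection_general a b hb
end
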